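/- arXiv:2102.08600 — 3 statements merged into one kernel-verified Lean document; each statement's English description precedes it below -/
import Mathlib

section
/- Under the stated assumptions, the convergence factor of the exact two-level hierarchical basis method satisfies the identity ‖E_TL‖_A = 1 − σ_TL, where σ_TL = λ_min^+( S · M̃_s^{-1} · S^T · A · (I − Π_A) ) is the smallest positive eigenvalue of the matrix S M̃_s^{-1} S^T A (I − Π_A). -/
open Matrix

/-- Smallest eigenvalue (real spectrum). -/
noncomputable def lamMin {n : ℕ} (M : Matrix (Fin n) (Fin n) ℝ) : ℝ :=
  sInf (spectrum ℝ M)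

/-- Largest eigenvalue (real spectrum). -/
noncomputable def lamMax {n : ℕ} (M : Matrix (Fin n) (Fin n) ℝ) : ℝ :=
  sSup (spectrum ℝ M)

/-- Smallest positive eigenvalue (real spectrum). -/
noncomputable def lamMinPos {n : ℕ} (M : Matrix (Fin n) (Fin n) ℝ) : ℝ :=
  sInf {t : ℝ | t ∈ spectrum ℝ M ∧ 0 < t}

/-- Energy norm of a vector induced by an SPD matrix `A`. -/
noncomputable def eNorm {n : ℕ} (A : Matrix (Fin n) (Fin n) ℝ) (v : Fin n → ℝ) : ℝ :=
  Real.sqrt (v ⬝ᵥ A.mulVec v)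

/-- `A`-norm of a matrix `B`: `‖B‖_A = sup_{v ≠ 0} ‖Bv‖_A / ‖v‖_A`. -/
noncomputable def aNorm {n : ℕ} (A B : Matrix (Fin n) (Fin n) ℝ) : ℝ :=
  sSup {r : ℝ | ∃ v : Fin n → ℝ, v ≠ 0 ∧ r = eNorm A (B.mulVec v) / eNorm A v}

/-- The `A`-orthogonal projection `Π_A = P (Pᵀ A P)⁻¹ Pᵀ A`. -/
noncomputable def proj {n nc : ℕ} (A : Matrix (Fin n) (Fin n) ℝ)
    (P : Matrix (Fin n) (Fin nc) ℝ) : Matrix (Fin n) (Fin n) ℝ :=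
  P * (Pᵀ * A * P)⁻¹ * Pᵀ * A

/-- `M̃_s = Msᵀ (Ms + Msᵀ - As)⁻¹ Ms`. -/
noncomputable def tMs {ns : ℕ} (Ms As : Matrix (Fin ns) (Fin ns) ℝ) :
    Matrix (Fin ns) (Fin ns) ℝ :=
  Msᵀ * (Ms + Msᵀ - As)⁻¹ * Ms

/-- `S M̃_s⁻¹ Sᵀ A`. -/
noncomputable def smoothX {n ns : ℕ} (A : Matrix (Fin n) (Fin n) ℝ)
    (S : Matrix (Fin n) (Fin ns) ℝ) (Ms : Matrix (Fin ns) (Fin ns) ℝ) :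
    Matrix (Fin n) (Fin n) ℝ :=
  S * (tMs Ms (Sᵀ * A * S))⁻¹ * Sᵀ * A

/-- `σ_TL = λ_min⁺( S M̃_s⁻¹ Sᵀ A (I - Π_A) )`. -/
noncomputable def sigmaTL {n ns nc : ℕ} (A : Matrix (Fin n) (Fin n) ℝ)
    (S : Matrix (Fin n) (Fin ns) ℝ) (P : Matrix (Fin n) (Fin nc) ℝ)
    (Ms : Matrix (Fin ns) (Fin ns) ℝ) : ℝ :=
  lamMinPos (smoothX A S Ms * (1 - proj A P))

/-- Exact TLHB iteration matrix. -/
noncomputable def Etl {n ns nc : ℕ} (A : Matrix (Fin n) (Fin n) ℝ)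
    (S : Matrix (Fin n) (Fin ns) ℝ) (P : Matrix (Fin n) (Fin nc) ℝ)
    (Ms : Matrix (Fin ns) (Fin ns) ℝ) : Matrix (Fin n) (Fin n) ℝ :=
  (1 - S * (Msᵀ)⁻¹ * Sᵀ * A) * (1 - proj A P) * (1 - S * Ms⁻¹ * Sᵀ * A)

/-- Inexact TLHB iteration matrix with coarse solver `Bc`. -/
noncomputable def EtlIn {n ns nc : ℕ} (A : Matrix (Fin n) (Fin n) ℝ)
    (S : Matrix (Fin n) (Fin ns) ℝ) (P : Matrix (Fin n) (Fin nc) ℝ)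
    (Ms : Matrix (Fin ns) (Fin ns) ℝ) (Bc : Matrix (Fin nc) (Fin nc) ℝ) :
    Matrix (Fin n) (Fin n) ℝ :=
  (1 - S * (Msᵀ)⁻¹ * Sᵀ * A) * (1 - P * Bc⁻¹ * Pᵀ * A) * (1 - S * Ms⁻¹ * Sᵀ * A)

/-!
Conjugating by a factor `R` of `A = Rᵀ R` turns the `A`-norm into the Euclidean norm, so we may
take `A = I`. Then `Q = I - Π` is a symmetric idempotent and, with `L = I - S Ms⁻¹ Sᵀ`, one has
`E_TL = Lᵀ Q L = Bᵀ B` for `B = Q L` and `L Lᵀ = I - X` with `X = S M̃s⁻¹ Sᵀ`; hence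
`‖E_TL‖ = ‖B Bᵀ‖ = ‖Q - C‖` with `C = Q X Q`. The hypotheses make `C` positive definite on the
range of `Q`, which is therefore the range of `C`, so `σ Q ≤ C` for `σ = λ_min⁺(C)`, with
equality on a `σ`-eigenvector of `C`. Finally `X Q = (X Q) Q` and `C = Q (X Q)` have the same
nonzero spectrum, so `σ = σ_TL`.
-/

section LinearAlgebra

variable {K : Type*} [Field K]

theorem Matrix.mem_spectrum_iff_exists_mulVec_eq_smul {m : Type*} [Fintype m] [DecidableEq m]
    {M : Matrix m m K} {t : K} :
    t ∈ spectrum K M ↔ ∃ v ≠ 0, M *ᵥ v = t • v := by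
  rw [spectrum.mem_iff, isUnit_iff_isUnit_det, isUnit_iff_ne_zero, not_not,
    ← exists_mulVec_eq_zero_iff]
  simp only [Algebra.algebraMap_eq_smul_one, sub_mulVec, smul_mulVec, one_mulVec, sub_eq_zero,
    eq_comm]

theorem Matrix.mulVec_injective_of_rank_eq {m : Type*} {l : ℕ} {B : Matrix m (Fin l) K}
    (h : B.rank = l) : Function.Injective B.mulVec := by
  have := LinearMap.finrank_range_add_finrank_ker B.mulVecLin
  rw [Module.finrank_fin_fun, ← rank, h, add_eq_left, Submodule.finrank_eq_zero,
    LinearMap.ker_eq_bot] at this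
  exact this

theorem Matrix.exists_mulVec_eq_zero_of_lt {k l : ℕ} (B : Matrix (Fin k) (Fin l) K) (h : k < l) :
    ∃ x ≠ 0, B *ᵥ x = 0 := by
  obtain ⟨x, hx, hx0⟩ := Submodule.ne_bot_iff _ |>.mp <|
    LinearMap.ker_ne_bot_of_finrank_lt (f := B.mulVecLin) (by simpa using h)
  exact ⟨x, hx0, hx⟩

end LinearAlgebra

section LamMinPos

variable {n : ℕ}

theorem lamMinPos_mul_comm (M N : Matrix (Fin n) (Fin n) ℝ) :
    lamMinPos (M * N) = lamMinPos (N * M) := by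
  have h := spectrum.nonzero_mul_comm (𝕜 := ℝ) M N
  unfold lamMinPos
  congr 1
  ext t
  simp only [Set.mem_ofPred_eq, and_congr_left_iff]
  exact fun ht => by simpa [ht.ne'] using Set.ext_iff.mp h t

theorem lamMinPos_eq_of_mul_eq {R M M' : Matrix (Fin n) (Fin n) ℝ} (hR : IsUnit R.det)
    (h : R * M = M' * R) : lamMinPos M = lamMinPos M' := by
  have hM : M = R⁻¹ * (M' * R) := by rw [← h, ← mul_assoc, nonsing_inv_mul _ hR, one_mul]
  rw [hM, lamMinPos_mul_comm, mul_assoc, mul_nonsing_inv _ hR, mul_one]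

theorem lamMinPos_mem_spectrum_and_pos {M : Matrix (Fin n) (Fin n) ℝ}
    (h : ∃ t ∈ spectrum ℝ M, 0 < t) : lamMinPos M ∈ spectrum ℝ M ∧ 0 < lamMinPos M :=
  Set.Nonempty.csInf_mem h <| M.finite_spectrum.subset fun _ ht => ht.1

theorem lamMinPos_le {M : Matrix (Fin n) (Fin n) ℝ} {t : ℝ} (ht : t ∈ spectrum ℝ M)
    (hpos : 0 < t) : lamMinPos M ≤ t :=
  csInf_le ⟨0, fun _ hs => hs.2.le⟩ ⟨ht, hpos⟩

theorem Matrix.PosSemidef.exists_pos_mem_spectrum {C : Matrix (Fin n) (Fin n) ℝ}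
    (hC : C.PosSemidef) (h0 : C ≠ 0) : ∃ t ∈ spectrum ℝ C, 0 < t := by
  obtain ⟨i, hi⟩ : ∃ i, hC.1.eigenvalues i ≠ 0 := by
    by_contra! h
    exact h0 (hC.1.eigenvalues_eq_zero_iff.mp (funext h))
  exact ⟨_, hC.1.eigenvalues_mem_spectrum_real i, (hC.eigenvalues_nonneg i).lt_of_ne' hi⟩

open scoped MatrixOrder in
/-- `C (C - λ) C` is positive semidefinite since `x (x - λ) x ≥ 0` on the spectrum of `C`. -/
theorem Matrix.PosSemidef.lamMinPos_mul_dotProduct_le {C : Matrix (Fin n) (Fin n) ℝ}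
    (hC : C.PosSemidef) (z : Fin n → ℝ) :
    lamMinPos C * (C *ᵥ z ⬝ᵥ C *ᵥ z) ≤ C *ᵥ (C *ᵥ z) ⬝ᵥ C *ᵥ z := by
  set c := lamMinPos C
  have hcfc : cfc (fun x : ℝ => x * (x - c) * x) C = C * (C - algebraMap ℝ _ c) * C := by
    rw [cfc_mul .., cfc_mul .., cfc_sub .., cfc_id' .., cfc_const ..]
  have hnonneg : 0 ≤ C * (C - algebraMap ℝ _ c) * C := by
    rw [← hcfc]
    refine cfc_nonneg fun x hx => ?_
    rcases (spectrum_nonneg_of_nonneg hC.nonneg hx).eq_or_lt with h0 | hpos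
    · simp [← h0]
    · have : 0 ≤ x - c := sub_nonneg.mpr (lamMinPos_le hx hpos)
      positivity
  have hCT : Cᵀ = C := hC.1
  have := hnonneg.posSemidef.dotProduct_mulVec_nonneg z
  rw [star_trivial, ← mulVec_mulVec, ← mulVec_mulVec, dotProduct_mulVec, ← mulVec_transpose, hCT,
    Algebra.algebraMap_eq_smul_one, sub_mulVec, smul_mulVec, one_mulVec, dotProduct_sub,
    dotProduct_smul, smul_eq_mul, dotProduct_comm] at this
  linarith [dotProduct_comm (C *ᵥ z) (C *ᵥ (C *ᵥ z))]

end LamMinPos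

section EnergyNorm

variable {n : ℕ}

theorem eNorm_one (v : Fin n → ℝ) : eNorm 1 v = √(v ⬝ᵥ v) := by
  simp [eNorm]

theorem dotProduct_self_nonneg (v : Fin n → ℝ) : 0 ≤ v ⬝ᵥ v :=
  Finset.sum_nonneg fun i _ => mul_self_nonneg (v i)

theorem dotProduct_self_pos {v : Fin n → ℝ} (hv : v ≠ 0) : 0 < v ⬝ᵥ v := by
  simpa using dotProduct_star_self_pos_iff.mpr hv

theorem eNorm_one_sq (v : Fin n → ℝ) : eNorm 1 v ^ 2 = v ⬝ᵥ v := by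
  rw [eNorm_one, Real.sq_sqrt (dotProduct_self_nonneg v)]

theorem eNorm_eq_eNorm_one_mulVec {A R : Matrix (Fin n) (Fin n) ℝ} (hRA : Rᵀ * R = A)
    (v : Fin n → ℝ) : eNorm A v = eNorm 1 (R *ᵥ v) := by
  rw [eNorm_one, eNorm, ← hRA, ← mulVec_mulVec, dotProduct_mulVec, vecMul_transpose]

theorem dotProduct_le_eNorm_one_mul (x v : Fin n → ℝ) : x ⬝ᵥ v ≤ eNorm 1 x * eNorm 1 v := by
  simpa [eNorm_one, dotProduct, sq] using Real.sum_mul_le_sqrt_mul_sqrt Finset.univ x v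

theorem eNorm_one_smul {c : ℝ} (hc : 0 ≤ c) (v : Fin n → ℝ) : eNorm 1 (c • v) = c * eNorm 1 v := by
  rw [eNorm_one, eNorm_one, smul_dotProduct, dotProduct_smul, smul_eq_mul, smul_eq_mul, ← mul_assoc,
    Real.sqrt_mul (mul_self_nonneg c), Real.sqrt_mul_self hc]

theorem mulVec_dotProduct_of_transpose_eq {M : Matrix (Fin n) (Fin n) ℝ} (hM : Mᵀ = M)
    (x y : Fin n → ℝ) : M *ᵥ x ⬝ᵥ y = x ⬝ᵥ M *ᵥ y := by
  rw [dotProduct_comm, dotProduct_mulVec, ← mulVec_transpose, hM, dotProduct_comm]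

theorem mul_transpose_mulVec_dotProduct (B : Matrix (Fin n) (Fin n) ℝ) (u : Fin n → ℝ) :
    (B * Bᵀ) *ᵥ u ⬝ᵥ u = Bᵀ *ᵥ u ⬝ᵥ Bᵀ *ᵥ u := by
  rw [dotProduct_comm, ← mulVec_mulVec, dotProduct_mulVec, ← mulVec_transpose]

theorem aNorm_eq_aNorm_one_of_mul_eq {A R B B' : Matrix (Fin n) (Fin n) ℝ} (hRA : Rᵀ * R = A)
    (hR : IsUnit R.det) (hB : R * B = B' * R) : aNorm A B = aNorm 1 B' := by
  have hRbij : Function.Bijective R.mulVec :=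
    ⟨mulVec_injective_iff_isUnit.mpr ((isUnit_iff_isUnit_det R).mpr hR),
      mulVec_surjective_iff_isUnit.mpr ((isUnit_iff_isUnit_det R).mpr hR)⟩
  have hnorm : ∀ v, eNorm A (B *ᵥ v) / eNorm A v = eNorm 1 (B' *ᵥ (R *ᵥ v)) / eNorm 1 (R *ᵥ v) := by
    intro v
    rw [eNorm_eq_eNorm_one_mulVec hRA, eNorm_eq_eNorm_one_mulVec hRA, mulVec_mulVec, hB,
      ← mulVec_mulVec]
  unfold aNorm
  congr 1
  ext r
  constructor
  · rintro ⟨v, hv, rfl⟩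
    exact ⟨R *ᵥ v, fun h => hv (hRbij.1 (h.trans (mulVec_zero R).symm)), hnorm v⟩
  · rintro ⟨w, hw, rfl⟩
    obtain ⟨v, rfl⟩ := hRbij.2 w
    exact ⟨v, by rintro rfl; exact hw (mulVec_zero R), (hnorm v).symm⟩

theorem aNorm_eq_of_le_of_eq {A B : Matrix (Fin n) (Fin n) ℝ} {c : ℝ} {v : Fin n → ℝ}
    (hA : A.PosDef) (hle : ∀ u, eNorm A (B *ᵥ u) ≤ c * eNorm A u) (hv : v ≠ 0)
    (heq : eNorm A (B *ᵥ v) = c * eNorm A v) : aNorm A B = c := by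
  have hpos : ∀ u ≠ 0, 0 < eNorm A u := fun u hu =>
    Real.sqrt_pos.mpr (by simpa using hA.dotProduct_mulVec_pos hu)
  refine IsGreatest.csSup_eq ⟨⟨v, hv, by rw [heq, mul_div_cancel_right₀ _ (hpos v hv).ne']⟩, ?_⟩
  rintro _ ⟨u, hu, rfl⟩
  exact (div_le_iff₀ (hpos u hu)).mpr (hle u)

theorem aNorm_one_transpose_mul_self_eq {B : Matrix (Fin n) (Fin n) ℝ} {c : ℝ} {w : Fin n → ℝ}
    (hle : ∀ u, (B * Bᵀ) *ᵥ u ⬝ᵥ u ≤ c * (u ⬝ᵥ u)) (hw : w ≠ 0) (hBw : (B * Bᵀ) *ᵥ w = c • w) :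
    aNorm 1 (Bᵀ * B) = c := by
  have hww := dotProduct_self_pos hw
  have hc : 0 ≤ c := by
    have h := mul_transpose_mulVec_dotProduct B w
    rw [hBw, smul_dotProduct, smul_eq_mul] at h
    exact nonneg_of_mul_nonneg_left (h ▸ dotProduct_self_nonneg _) hww
  have hbound : ∀ v, eNorm 1 ((Bᵀ * B) *ᵥ v) ≤ c * eNorm 1 v := by
    intro v
    set a := eNorm 1 ((Bᵀ * B) *ᵥ v)
    have hBv := mul_transpose_mulVec_dotProduct Bᵀ v
    rw [transpose_transpose] at hBv
    have h1 := hle (B *ᵥ v)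
    rw [mul_transpose_mulVec_dotProduct, mulVec_mulVec, ← hBv, ← eNorm_one_sq] at h1
    have h2 := dotProduct_le_eNorm_one_mul ((Bᵀ * B) *ᵥ v) v
    have h3 : a * a ≤ a * (c * eNorm 1 v) := by
      nlinarith [mul_le_mul_of_nonneg_left h2 hc]
    rcases (show 0 ≤ a from Real.sqrt_nonneg _).eq_or_lt with ha | ha
    · rw [← ha]
      exact mul_nonneg hc (Real.sqrt_nonneg _)
    · exact le_of_mul_le_mul_left h3 ha
  by_cases hBw0 : Bᵀ *ᵥ w = 0
  · refine aNorm_eq_of_le_of_eq PosDef.one hbound hw (le_antisymm (hbound w) ?_)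
    have h := mul_transpose_mulVec_dotProduct B w
    rw [hBw, hBw0, smul_dotProduct, smul_eq_mul, dotProduct_zero] at h
    rw [(mul_eq_zero.mp h).resolve_right hww.ne', zero_mul]
    exact Real.sqrt_nonneg _
  · refine aNorm_eq_of_le_of_eq PosDef.one hbound hBw0 ?_
    rw [mulVec_mulVec, mul_assoc, ← mulVec_mulVec, hBw, mulVec_smul, eNorm_one_smul hc]

end EnergyNorm

section Projection

variable {n : ℕ} {Q C : Matrix (Fin n) (Fin n) ℝ}

theorem mulVec_dotProduct_eq_of_projection (hQT : Qᵀ = Q) (hQQ : Q * Q = Q) (u : Fin n → ℝ) :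
    Q *ᵥ u ⬝ᵥ u = Q *ᵥ u ⬝ᵥ Q *ᵥ u := by
  have h := mul_transpose_mulVec_dotProduct Q u
  rwa [hQT, hQQ] at h

theorem mulVec_dotProduct_le_of_projection (hQT : Qᵀ = Q) (hQQ : Q * Q = Q) (u : Fin n → ℝ) :
    Q *ᵥ u ⬝ᵥ u ≤ u ⬝ᵥ u := by
  have h := mulVec_dotProduct_eq_of_projection (Q := 1 - Q)
    (by rw [transpose_sub, transpose_one, hQT]) (by simp [sub_mul, mul_sub, hQQ]) u
  rw [sub_mulVec, one_mulVec, sub_dotProduct] at h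
  linarith [dotProduct_self_nonneg (u - Q *ᵥ u)]

theorem mul_mul_mulVec_dotProduct (hQT : Qᵀ = Q) (X : Matrix (Fin n) (Fin n) ℝ)
    (z : Fin n → ℝ) : (Q * X * Q) *ᵥ z ⬝ᵥ z = X *ᵥ (Q *ᵥ z) ⬝ᵥ Q *ᵥ z := by
  rw [← mulVec_mulVec, ← mulVec_mulVec, mulVec_dotProduct_of_transpose_eq hQT]

theorem posSemidef_mul_mul_of_projection {X : Matrix (Fin n) (Fin n) ℝ} (hQT : Qᵀ = Q)
    (hQQ : Q * Q = Q) (hXT : Xᵀ = X) (hX : ∀ z ≠ 0, Q *ᵥ z = z → 0 < X *ᵥ z ⬝ᵥ z) :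
    (Q * X * Q).PosSemidef := by
  refine PosSemidef.of_dotProduct_mulVec_nonneg
    (by simp [IsHermitian, hQT, hXT, mul_assoc]) fun z => ?_
  rw [star_trivial, dotProduct_comm, mul_mul_mulVec_dotProduct hQT]
  by_cases hQz : Q *ᵥ z = 0
  · simp [hQz]
  · exact (hX _ hQz (by rw [mulVec_mulVec, hQQ])).le

theorem exists_mulVec_eq_projection_mulVec (hQQ : Q * Q = Q) (hQC : Q * C = C)
    (hker : ∀ z, Q *ᵥ z = z → C *ᵥ z = 0 → z = 0) (u : Fin n → ℝ) :
    ∃ z, C *ᵥ z = Q *ᵥ u := by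
  -- `C + (1 - Q)` is invertible and `Q * (C + (1 - Q)) = C`.
  set M := C + (1 - Q)
  have hQM : Q * M = C := by simp only [M, mul_add, mul_sub, mul_one, hQC, hQQ, sub_self, add_zero]
  have hM : IsUnit M.det := by
    refine isUnit_iff_ne_zero.mpr fun h0 => ?_
    obtain ⟨z, hz, hMz⟩ := exists_mulVec_eq_zero_iff.mpr h0
    have hCz : C *ᵥ z = 0 := by rw [← hQM, ← mulVec_mulVec, hMz, mulVec_zero]
    have hQz : Q *ᵥ z = z := by
      simpa [M, add_mulVec, sub_mulVec, hCz, sub_eq_zero, eq_comm] using hMz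
    exact hz (hker z hQz hCz)
  refine ⟨M⁻¹ *ᵥ (Q *ᵥ u), ?_⟩
  rw [← hQM, mulVec_mulVec, mul_assoc, mul_nonsing_inv _ hM, mul_one, mulVec_mulVec, hQQ]

theorem lamMinPos_mul_dotProduct_le_of_projection (hQT : Qᵀ = Q) (hQQ : Q * Q = Q)
    (hC : C.PosSemidef) (hQC : Q * C = C) (hker : ∀ z, Q *ᵥ z = z → C *ᵥ z = 0 → z = 0)
    (u : Fin n → ℝ) : lamMinPos C * (Q *ᵥ u ⬝ᵥ u) ≤ C *ᵥ u ⬝ᵥ u := by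
  have hCT : Cᵀ = C := hC.1
  have hCQ : C * Q = C := by rw [← hCT, ← hQT, ← transpose_mul, hQC]
  obtain ⟨z, hz⟩ := exists_mulVec_eq_projection_mulVec hQQ hQC hker u
  have hQu : Q *ᵥ u ⬝ᵥ u = C *ᵥ z ⬝ᵥ C *ᵥ z := by
    rw [mulVec_dotProduct_eq_of_projection hQT hQQ, hz]
  have hCu : C *ᵥ u ⬝ᵥ u = C *ᵥ (C *ᵥ z) ⬝ᵥ C *ᵥ z := by
    calc C *ᵥ u ⬝ᵥ u = Q *ᵥ (C *ᵥ (Q *ᵥ u)) ⬝ᵥ u := by rw [mulVec_mulVec, mulVec_mulVec, hQC, hCQ]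
      _ = C *ᵥ (C *ᵥ z) ⬝ᵥ C *ᵥ z := by rw [mulVec_dotProduct_of_transpose_eq hQT, hz]
  rw [hQu, hCu]
  exact hC.lamMinPos_mul_dotProduct_le z

end Projection

section TwoLevel

variable {n : ℕ}

theorem aNorm_one_transpose_mul_mul_eq {Q L X : Matrix (Fin n) (Fin n) ℝ} (hQT : Qᵀ = Q)
    (hQQ : Q * Q = Q) (hLX : L * Lᵀ = 1 - X) (hQ : ∃ z ≠ 0, Q *ᵥ z = z)
    (hX : ∀ z ≠ 0, Q *ᵥ z = z → 0 < X *ᵥ z ⬝ᵥ z) :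
    aNorm 1 (Lᵀ * Q * L) = 1 - lamMinPos (X * Q) := by
  have hXT : Xᵀ = X := by
    rw [← sub_sub_cancel 1 X, ← hLX, transpose_sub, transpose_one, transpose_mul,
      transpose_transpose]
  set C := Q * X * Q with hC_def
  have hC : C.PosSemidef := posSemidef_mul_mul_of_projection hQT hQQ hXT hX
  have hQC : Q * C = C := by rw [hC_def, ← mul_assoc, ← mul_assoc, hQQ]
  have hker : ∀ z, Q *ᵥ z = z → C *ᵥ z = 0 → z = 0 := fun z hQz hCz => by
    by_contra hz
    have h := mul_mul_mulVec_dotProduct hQT X z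
    rw [← hC_def, hCz, hQz, zero_dotProduct] at h
    exact (hX z hz hQz).ne h
  obtain ⟨z₀, hz₀, hQz₀⟩ := hQ
  have hC0 : C ≠ 0 := fun h => hz₀ (hker z₀ hQz₀ (by rw [h, zero_mulVec]))
  obtain ⟨hcσ, hcpos⟩ := lamMinPos_mem_spectrum_and_pos (hC.exists_pos_mem_spectrum hC0)
  obtain ⟨w, hw, hCw⟩ := mem_spectrum_iff_exists_mulVec_eq_smul.mp hcσ
  set c := lamMinPos C
  have hQw : Q *ᵥ w = w := by
    refine smul_right_injective _ hcpos.ne' ?_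
    simp only [← mulVec_smul, ← hCw, mulVec_mulVec, hQC]
  have hBBT : Q * L * (Q * L)ᵀ = Q - C := by
    rw [transpose_mul, hQT, mul_assoc, ← mul_assoc L, hLX, sub_mul, one_mul, mul_sub, hQQ,
      ← mul_assoc]
  have hBTB : (Q * L)ᵀ * (Q * L) = Lᵀ * Q * L := by
    rw [transpose_mul, hQT, mul_assoc, ← mul_assoc Q, hQQ, ← mul_assoc]
  have hQCw : (Q - C) *ᵥ w = (1 - c) • w := by rw [sub_mulVec, hQw, hCw, sub_smul, one_smul]
  have hc1 : c ≤ 1 := by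
    have h := mul_transpose_mulVec_dotProduct (Q * L) w
    rw [hBBT, hQCw, smul_dotProduct, smul_eq_mul] at h
    exact sub_nonneg.mp <|
      nonneg_of_mul_nonneg_left (h ▸ dotProduct_self_nonneg _) (dotProduct_self_pos hw)
  have hσ : lamMinPos (X * Q) = c := by
    rw [← hQQ, ← mul_assoc, lamMinPos_mul_comm, ← mul_assoc]
  rw [← hBTB, hσ]
  refine aNorm_one_transpose_mul_self_eq (fun u => ?_) hw (by rw [hBBT, hQCw])
  have hcQ := lamMinPos_mul_dotProduct_le_of_projection hQT hQQ hC hQC hker u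
  have hQu := mulVec_dotProduct_le_of_projection hQT hQQ u
  rw [hBBT, sub_mulVec, sub_dotProduct]
  nlinarith [mul_le_mul_of_nonneg_left hQu (sub_nonneg.mpr hc1)]

end TwoLevel

section TLHB

variable {n ns nc : ℕ}

theorem proj_mul_proj {A : Matrix (Fin n) (Fin n) ℝ} {P : Matrix (Fin n) (Fin nc) ℝ}
    (hG : IsUnit (Pᵀ * A * P).det) : proj A P * proj A P = proj A P := by
  rw [proj, show P * (Pᵀ * A * P)⁻¹ * Pᵀ * A * (P * (Pᵀ * A * P)⁻¹ * Pᵀ * A) =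
      P * (Pᵀ * A * P)⁻¹ * (Pᵀ * A * P) * (Pᵀ * A * P)⁻¹ * Pᵀ * A by
        simp only [Matrix.mul_assoc],
    nonsing_inv_mul_cancel_right _ _ hG]

theorem transpose_mul_proj {A : Matrix (Fin n) (Fin n) ℝ} {P : Matrix (Fin n) (Fin nc) ℝ}
    (hG : IsUnit (Pᵀ * A * P).det) : Pᵀ * A * proj A P = Pᵀ * A := by
  rw [proj, show Pᵀ * A * (P * (Pᵀ * A * P)⁻¹ * Pᵀ * A) =
      Pᵀ * A * P * (Pᵀ * A * P)⁻¹ * (Pᵀ * A) by simp only [Matrix.mul_assoc],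
    mul_nonsing_inv _ hG, Matrix.one_mul]

theorem transpose_proj_one (P : Matrix (Fin n) (Fin nc) ℝ) : (proj 1 P)ᵀ = proj 1 P := by
  simp [proj, transpose_nonsing_inv, Matrix.mul_assoc]

theorem inv_tMs {Ms As : Matrix (Fin ns) (Fin ns) ℝ} (hW : IsUnit (Ms + Msᵀ - As).det) :
    (tMs Ms As)⁻¹ = Ms⁻¹ * (Ms + Msᵀ - As) * (Msᵀ)⁻¹ := by
  rw [tMs, Matrix.mul_inv_rev, Matrix.mul_inv_rev, nonsing_inv_nonsing_inv _ hW, mul_assoc]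

theorem smoothX_one (S : Matrix (Fin n) (Fin ns) ℝ) {Ms : Matrix (Fin ns) (Fin ns) ℝ}
    (hW : IsUnit (Ms + Msᵀ - Sᵀ * S).det) :
    smoothX 1 S Ms = S * (Ms⁻¹ * (Ms + Msᵀ - Sᵀ * S) * (Msᵀ)⁻¹) * Sᵀ := by
  simp only [smoothX, Matrix.mul_one]
  rw [inv_tMs hW]

theorem mul_transpose_one_sub_smoother {S : Matrix (Fin n) (Fin ns) ℝ}
    {Ms : Matrix (Fin ns) (Fin ns) ℝ} (hMs : IsUnit Ms.det) (hW : IsUnit (Ms + Msᵀ - Sᵀ * S).det) :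
    (1 - S * Ms⁻¹ * Sᵀ) * (1 - S * Ms⁻¹ * Sᵀ)ᵀ = 1 - smoothX 1 S Ms := by
  have hMsT : IsUnit Msᵀ.det := by rwa [det_transpose]
  rw [smoothX_one S hW]
  simp only [transpose_sub, transpose_one, transpose_mul, transpose_transpose,
    transpose_nonsing_inv, Matrix.sub_mul, Matrix.mul_sub, Matrix.mul_add, Matrix.add_mul,
    Matrix.one_mul, Matrix.mul_one, Matrix.mul_assoc, nonsing_inv_mul_cancel_left _ _ hMs,
    mul_nonsing_inv _ hMsT]
  abel

theorem smoothX_one_mulVec_dotProduct_pos {S : Matrix (Fin n) (Fin ns) ℝ}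
    {Ms : Matrix (Fin ns) (Fin ns) ℝ} (hMs : IsUnit Ms.det) (hW : (Ms + Msᵀ - Sᵀ * S).PosDef)
    {z : Fin n → ℝ} (hz : Sᵀ *ᵥ z ≠ 0) : 0 < smoothX 1 S Ms *ᵥ z ⬝ᵥ z := by
  have hMsT : IsUnit Msᵀ.det := by rwa [det_transpose]
  set y := (Msᵀ)⁻¹ *ᵥ (Sᵀ *ᵥ z)
  have hy : y ≠ 0 := fun h => hz <| by
    rw [← one_mulVec (Sᵀ *ᵥ z), ← mul_nonsing_inv _ hMsT, ← mulVec_mulVec]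
    exact (congrArg (Msᵀ *ᵥ ·) h).trans (mulVec_zero _)
  have hquad : smoothX 1 S Ms *ᵥ z ⬝ᵥ z = y ⬝ᵥ (Ms + Msᵀ - Sᵀ * S) *ᵥ y := by
    rw [smoothX_one S ((isUnit_iff_isUnit_det _).mp hW.isUnit)]
    simp only [← mulVec_mulVec]
    rw [dotProduct_comm, dotProduct_mulVec, ← mulVec_transpose, dotProduct_mulVec,
      ← mulVec_transpose, transpose_nonsing_inv]
  simpa [hquad] using hW.dotProduct_mulVec_pos hy

theorem isUnit_det_transpose_mul_self {P : Matrix (Fin n) (Fin nc) ℝ} (hP : P.rank = nc) :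
    IsUnit (Pᵀ * P).det :=
  (isUnit_iff_isUnit_det _).mp
    (PosDef.conjTranspose_mul_self P (mulVec_injective_of_rank_eq hP)).isUnit

theorem aNorm_one_Etl_eq {S : Matrix (Fin n) (Fin ns) ℝ} {P : Matrix (Fin n) (Fin nc) ℝ}
    {Ms : Matrix (Fin ns) (Fin ns) ℝ} (hP : P.rank = nc) (hnc : nc < n)
    (hSP : (fromCols S P).rank = n) (hMs : IsUnit Ms.det) (hW : (Ms + Msᵀ - Sᵀ * S).PosDef) :
    aNorm 1 (Etl 1 S P Ms) = 1 - sigmaTL 1 S P Ms := by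
  have hG : IsUnit (Pᵀ * (1 : Matrix (Fin n) (Fin n) ℝ) * P).det := by
    rw [Matrix.mul_one]
    exact isUnit_det_transpose_mul_self hP
  set Q := 1 - proj 1 P with hQ_def
  have hQT : Qᵀ = Q := by rw [transpose_sub, transpose_one, transpose_proj_one]
  have hQQ : Q * Q = Q := by simp [Q, sub_mul, mul_sub, proj_mul_proj hG]
  have hPQ : Pᵀ * Q = 0 := by
    have h := transpose_mul_proj hG
    rw [Matrix.mul_one] at h
    rw [hQ_def, Matrix.mul_sub, Matrix.mul_one, h, sub_self]
  have hE : Etl 1 S P Ms = (1 - S * Ms⁻¹ * Sᵀ)ᵀ * Q * (1 - S * Ms⁻¹ * Sᵀ) := by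
    simp [Etl, Q, transpose_nonsing_inv, Matrix.mul_assoc]
  rw [hE, sigmaTL]
  refine aNorm_one_transpose_mul_mul_eq hQT hQQ
    (mul_transpose_one_sub_smoother hMs ((isUnit_iff_isUnit_det _).mp hW.isUnit)) ?_ ?_
  · obtain ⟨z, hz, hPz⟩ := exists_mulVec_eq_zero_of_lt Pᵀ hnc
    refine ⟨z, hz, ?_⟩
    simp [Q, proj, sub_mulVec, ← mulVec_mulVec, hPz]
  · intro z hz hQz
    refine smoothX_one_mulVec_dotProduct_pos hMs hW fun hSz => hz ?_
    have hPz : Pᵀ *ᵥ z = 0 := by rw [← hQz, mulVec_mulVec, hPQ, zero_mulVec]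
    refine mulVec_injective_of_rank_eq (B := (fromCols S P)ᵀ) (by rwa [rank_transpose]) ?_
    rw [transpose_fromCols, fromRows_mulVec, hSz, hPz, mulVec_zero, Sum.elim_zero_zero]

end TLHB

section Conjugation

variable {n ns nc : ℕ} {A R : Matrix (Fin n) (Fin n) ℝ}

open scoped MatrixOrder in
theorem Matrix.PosDef.exists_transpose_mul_self_eq (hA : A.PosDef) :
    ∃ R : Matrix (Fin n) (Fin n) ℝ, Rᵀ * R = A ∧ IsUnit R.det := by
  refine ⟨CFC.sqrt A, ?_, ?_⟩
  · rw [show (CFC.sqrt A)ᵀ = CFC.sqrt A from (CFC.sqrt_nonneg A).isSelfAdjoint,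
      CFC.sqrt_mul_sqrt_self A hA.posSemidef.nonneg]
  · have h := (isUnit_iff_isUnit_det A).mp hA.isUnit
    rw [← CFC.sqrt_mul_sqrt_self A hA.posSemidef.nonneg, det_mul] at h
    exact isUnit_of_mul_isUnit_right h

theorem transpose_mul_mul_mul_eq (hRA : Rᵀ * R = A) {k : Type*} [Fintype k]
    (Y : Matrix (Fin n) k ℝ) : (R * Y)ᵀ * (R * Y) = Yᵀ * A * Y := by
  rw [transpose_mul, Matrix.mul_assoc, ← Matrix.mul_assoc Rᵀ, hRA, Matrix.mul_assoc]

theorem mul_mul_mul_transpose_mul_eq (hRA : Rᵀ * R = A) {k : Type*} [Fintype k]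
    (Y : Matrix (Fin n) k ℝ) (B : Matrix k k ℝ) :
    R * (Y * B * Yᵀ * A) = R * Y * B * (R * Y)ᵀ * 1 * R := by
  rw [← hRA]
  simp only [transpose_mul, Matrix.mul_one, Matrix.mul_assoc]

theorem mul_proj (hRA : Rᵀ * R = A) (P : Matrix (Fin n) (Fin nc) ℝ) :
    R * proj A P = proj 1 (R * P) * R := by
  rw [proj, proj, Matrix.mul_one (R * P)ᵀ, transpose_mul_mul_mul_eq hRA,
    mul_mul_mul_transpose_mul_eq hRA]

theorem mul_smoothX (hRA : Rᵀ * R = A) (S : Matrix (Fin n) (Fin ns) ℝ)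
    (Ms : Matrix (Fin ns) (Fin ns) ℝ) : R * smoothX A S Ms = smoothX 1 (R * S) Ms * R := by
  rw [smoothX, smoothX, Matrix.mul_one (R * S)ᵀ, transpose_mul_mul_mul_eq hRA,
    mul_mul_mul_transpose_mul_eq hRA]

theorem mul_one_sub_of_mul_eq {M M' : Matrix (Fin n) (Fin n) ℝ} (h : R * M = M' * R) :
    R * (1 - M) = (1 - M') * R := by
  rw [Matrix.mul_sub, Matrix.sub_mul, h, Matrix.mul_one, Matrix.one_mul]

theorem mul_Etl (hRA : Rᵀ * R = A) (S : Matrix (Fin n) (Fin ns) ℝ)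
    (P : Matrix (Fin n) (Fin nc) ℝ) (Ms : Matrix (Fin ns) (Fin ns) ℝ) :
    R * Etl A S P Ms = Etl 1 (R * S) (R * P) Ms * R := by
  rw [Etl, Etl, ← Matrix.mul_assoc, ← Matrix.mul_assoc,
    mul_one_sub_of_mul_eq (mul_mul_mul_transpose_mul_eq hRA S _), Matrix.mul_assoc _ R,
    mul_one_sub_of_mul_eq (mul_proj hRA P), ← Matrix.mul_assoc, Matrix.mul_assoc _ R,
    mul_one_sub_of_mul_eq (mul_mul_mul_transpose_mul_eq hRA S _), ← Matrix.mul_assoc]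

theorem sigmaTL_eq_sigmaTL_one (hRA : Rᵀ * R = A) (hR : IsUnit R.det)
    (S : Matrix (Fin n) (Fin ns) ℝ) (P : Matrix (Fin n) (Fin nc) ℝ)
    (Ms : Matrix (Fin ns) (Fin ns) ℝ) : sigmaTL A S P Ms = sigmaTL 1 (R * S) (R * P) Ms :=
  lamMinPos_eq_of_mul_eq hR <| by
    rw [← Matrix.mul_assoc, mul_smoothX hRA, Matrix.mul_assoc,
      mul_one_sub_of_mul_eq (mul_proj hRA P), ← Matrix.mul_assoc]

end Conjugation

theorem exact_tlhb_identity_general {n ns nc : ℕ}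
    (A : Matrix (Fin n) (Fin n) ℝ) (hA : A.PosDef)
    (S : Matrix (Fin n) (Fin ns) ℝ)
    (P : Matrix (Fin n) (Fin nc) ℝ) (hP : P.rank = nc)
    (hnc : nc < n)
    (hSP : (fromCols S P).rank = n)
    (Ms : Matrix (Fin ns) (Fin ns) ℝ) (hMs : IsUnit Ms.det)
    (hMsA : (Ms + Msᵀ - Sᵀ * A * S).PosDef) :
    aNorm A (Etl A S P Ms) = 1 - sigmaTL A S P Ms := by
  obtain ⟨R, hRA, hR⟩ := hA.exists_transpose_mul_self_eq
  rw [aNorm_eq_aNorm_one_of_mul_eq hRA hR (mul_Etl hRA S P Ms), sigmaTL_eq_sigmaTL_one hRA hR]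
  refine aNorm_one_Etl_eq ?_ hnc ?_ hMs ?_
  · rwa [rank_mul_eq_right_of_isUnit_det _ _ hR]
  · rwa [← mul_fromCols, rank_mul_eq_right_of_isUnit_det _ _ hR]
  · rwa [transpose_mul_mul_mul_eq hRA]

/-- Theorem 3.1 (exact TLHB convergence identity): `‖E_TL‖_A = 1 - σ_TL`. -/
theorem exact_tlhb_identity {n ns nc : ℕ}
    (A : Matrix (Fin n) (Fin n) ℝ) (hA : A.PosDef)
    (S : Matrix (Fin n) (Fin ns) ℝ) (hS : S.rank = ns)
    (P : Matrix (Fin n) (Fin nc) ℝ) (hP : P.rank = nc)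
    (hns : ns < n) (hnc : nc < n) (hsum : n ≤ ns + nc)
    (hSP : (fromCols S P).rank = n)
    (Ms : Matrix (Fin ns) (Fin ns) ℝ) (hMs : IsUnit Ms.det)
    (hMsA : (Ms + Msᵀ - Sᵀ * A * S).PosDef) :
    aNorm A (Etl A S P Ms) = 1 - sigmaTL A S P Ms :=
  exact_tlhb_identity_general A hA S P hP hnc hSP Ms hMs hMsA
end

section
/- Suppose in addition that n_c = n − n_s, the n×n block matrix (S P) is nonsingular, and the smoother is M_s = A_s := S^T A S. Then the convergence factor of the exact TLHB method equals the square of the C.B.S. constant: ‖E_TL‖_A = γ², where γ = ‖A_s^{−1/2} S^T A P A_c^{−1/2}‖_2 with A_c := P^T A P. -/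
/-!
Write `Q` and `Π` for the `A`-orthogonal projections onto `range S` and `range P`, so that
`E_TL = (I - Q)(I - Π)(I - Q) = Tᴴ T` in the `A`-geometry, with `T = (I - Π)(I - Q)`.

Upper bound: if `u ⊥_A range S` and `u = S a + P b`, then `‖u‖² = ⟨Π u, P b⟩ ≤ ‖Π u‖ ‖P b‖`,
while the C.B.S. inequality gives `‖u‖² ≥ (1 - γ²) ‖P b‖²`. Hence `‖Π u‖² ≥ (1 - γ²) ‖u‖²`,
i.e. `‖(I - Π) u‖ ≤ γ ‖u‖`, so `‖T‖_A ≤ γ` and `‖E_TL‖_A ≤ γ²`.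

Lower bound: by compactness `γ` is attained at unit vectors `x = S a`, `y = P b`. Maximality
forces `Q y = γ x` and `Π x = γ y`, and then `y - γ x ≠ 0` is an eigenvector of `E_TL` with
eigenvalue `γ²`. When there are no admissible pairs (`n_s = 0` or `n_c = 0`), `γ = 0` and the
upper bound suffices.
-/

open Matrix

section EnergyForm

variable {ι : Type*} [Fintype ι] {A : Matrix ι ι ℝ}

lemma dotProduct_mulVec_comm (hA : Aᵀ = A) (x y : ι → ℝ) :
    x ⬝ᵥ A *ᵥ y = y ⬝ᵥ A *ᵥ x := by
  rw [← dotProduct_transpose_mulVec, hA]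

lemma mulVec_dotProduct_mul_mulVec {κ₁ κ₂ : Type*} [Fintype κ₁] [Fintype κ₂]
    (S : Matrix ι κ₁ ℝ) (P : Matrix ι κ₂ ℝ) (a : κ₁ → ℝ) (b : κ₂ → ℝ) :
    (S *ᵥ a) ⬝ᵥ A *ᵥ (P *ᵥ b) = a ⬝ᵥ (Sᵀ * A * P) *ᵥ b := by
  rw [← mulVec_mulVec, ← mulVec_mulVec, dotProduct_transpose_mulVec, dotProduct_comm]

lemma Matrix.PosSemidef.dotProduct_mulVec_self_nonneg (hA : A.PosSemidef) (x : ι → ℝ) :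
    0 ≤ x ⬝ᵥ A *ᵥ x :=
  hA.dotProduct_mulVec_nonneg x

lemma Matrix.PosDef.dotProduct_mulVec_self_pos (hA : A.PosDef) {x : ι → ℝ} (hx : x ≠ 0) :
    0 < x ⬝ᵥ A *ᵥ x :=
  hA.dotProduct_mulVec_pos hx

lemma Matrix.PosSemidef.sq_dotProduct_mulVec_le (hA : A.PosSemidef) (x y : ι → ℝ) :
    (x ⬝ᵥ A *ᵥ y) ^ 2 ≤ (x ⬝ᵥ A *ᵥ x) * (y ⬝ᵥ A *ᵥ y) := by
  let := A.toSeminormedAddCommGroup hA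
  let := A.toInnerProductSpace hA
  have hinner : ∀ u v : ι → ℝ, @inner ℝ _ _ u v = u ⬝ᵥ A *ᵥ v := fun u v => by
    show (A *ᵥ v) ⬝ᵥ star u = _
    rw [dotProduct_comm]
    rfl
  have := real_inner_mul_inner_self_le x y
  rw [hinner, hinner, hinner] at this
  nlinarith

lemma Matrix.PosDef.transpose_mul_mul_same (hA : A.PosDef) {κ : Type*} [Fintype κ]
    {S : Matrix ι κ ℝ} (hS : Function.Injective S.mulVec) : (Sᵀ * A * S).PosDef := by
  simpa [conjTranspose_eq_transpose_of_trivial] using hA.conjTranspose_mul_mul_same hS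

lemma inv_sqrt_smul_dotProduct_mulVec {a : ι → ℝ} (ha : 0 < a ⬝ᵥ A *ᵥ a) :
    ((√(a ⬝ᵥ A *ᵥ a))⁻¹ • a) ⬝ᵥ A *ᵥ ((√(a ⬝ᵥ A *ᵥ a))⁻¹ • a) = 1 := by
  rw [mulVec_smul, dotProduct_smul, smul_dotProduct, smul_eq_mul, smul_eq_mul, ← mul_assoc,
    ← mul_inv, Real.mul_self_sqrt ha.le, inv_mul_cancel₀ ha.ne']

lemma one_sub_sq_mul_le_add_dotProduct_mulVec (hA : A.PosSemidef) {x y : ι → ℝ} {γ : ℝ}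
    (h : -(x ⬝ᵥ A *ᵥ y) ≤ γ * √((x ⬝ᵥ A *ᵥ x) * (y ⬝ᵥ A *ᵥ y))) :
    (1 - γ ^ 2) * (y ⬝ᵥ A *ᵥ y) ≤ (x + y) ⬝ᵥ A *ᵥ (x + y) := by
  have hx := hA.dotProduct_mulVec_self_nonneg x
  have hy := hA.dotProduct_mulVec_self_nonneg y
  have hAs : Aᵀ = A := hA.isHermitian
  have hyx := dotProduct_mulVec_comm hAs y x
  rw [Real.sqrt_mul hx] at h
  have hsx := Real.sq_sqrt hx
  have hsy := Real.sq_sqrt hy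
  simp only [mulVec_add, dotProduct_add, add_dotProduct]
  nlinarith [sq_nonneg (√(x ⬝ᵥ A *ᵥ x) - γ * √(y ⬝ᵥ A *ᵥ y))]

lemma mulVec_dotProduct_self_le_of_adjoint_mul_self (hA : A.PosSemidef) {E T : Matrix ι ι ℝ}
    (hET : ∀ x z, (E *ᵥ x) ⬝ᵥ A *ᵥ z = (T *ᵥ x) ⬝ᵥ A *ᵥ (T *ᵥ z)) {c : ℝ} (hc : 0 ≤ c)
    (hT : ∀ x, (T *ᵥ x) ⬝ᵥ A *ᵥ (T *ᵥ x) ≤ c * (x ⬝ᵥ A *ᵥ x)) (x : ι → ℝ) :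
    (E *ᵥ x) ⬝ᵥ A *ᵥ (E *ᵥ x) ≤ c ^ 2 * (x ⬝ᵥ A *ᵥ x) := by
  have hcs := hA.sq_dotProduct_mulVec_le (T *ᵥ x) (T *ᵥ (E *ᵥ x))
  rw [← hET] at hcs
  have hnx := hA.dotProduct_mulVec_self_nonneg x
  have hnE := hA.dotProduct_mulVec_self_nonneg (E *ᵥ x)
  have hnTE := hA.dotProduct_mulVec_self_nonneg (T *ᵥ (E *ᵥ x))
  have hsq : ((E *ᵥ x) ⬝ᵥ A *ᵥ (E *ᵥ x)) * ((E *ᵥ x) ⬝ᵥ A *ᵥ (E *ᵥ x)) ≤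
      (c ^ 2 * (x ⬝ᵥ A *ᵥ x)) * ((E *ᵥ x) ⬝ᵥ A *ᵥ (E *ᵥ x)) := by
    nlinarith [mul_le_mul (hT x) (hT (E *ᵥ x)) hnTE (by positivity)]
  rcases hnE.eq_or_lt with hzero | hpos
  · rw [← hzero]
    positivity
  · exact le_of_mul_le_mul_right hsq hpos

end EnergyForm

section SelfAdjoint

variable {ι : Type*} [Fintype ι] {A M : Matrix ι ι ℝ}

lemma mulVec_dotProduct_mulVec_comm (hM : Mᵀ * A = A * M) (x y : ι → ℝ) :
    (M *ᵥ x) ⬝ᵥ A *ᵥ y = x ⬝ᵥ A *ᵥ (M *ᵥ y) := by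
  rw [dotProduct_comm, ← dotProduct_transpose_mulVec, mulVec_mulVec, hM, ← mulVec_mulVec]

lemma mulVec_dotProduct_mulVec_self (hM : Mᵀ * A = A * M) (hMM : IsIdempotentElem M)
    (x : ι → ℝ) : (M *ᵥ x) ⬝ᵥ A *ᵥ (M *ᵥ x) = x ⬝ᵥ A *ᵥ (M *ᵥ x) := by
  rw [mulVec_dotProduct_mulVec_comm hM, mulVec_mulVec x M M, hMM.eq]

lemma mul_mul_mulVec_dotProduct_s3 {R₁ R₂ : Matrix ι ι ℝ} (h₁ : R₁ᵀ * A = A * R₁)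
    (h₂ : R₂ᵀ * A = A * R₂) (h₂₂ : IsIdempotentElem R₂) (x z : ι → ℝ) :
    ((R₁ * R₂ * R₁) *ᵥ x) ⬝ᵥ A *ᵥ z = ((R₂ * R₁) *ᵥ x) ⬝ᵥ A *ᵥ ((R₂ * R₁) *ᵥ z) := by
  calc ((R₁ * R₂ * R₁) *ᵥ x) ⬝ᵥ A *ᵥ z = ((R₂ * R₁) *ᵥ x) ⬝ᵥ A *ᵥ (R₁ *ᵥ z) := by
        rw [Matrix.mul_assoc, ← mulVec_mulVec, mulVec_dotProduct_mulVec_comm h₁]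
    _ = (R₂ *ᵥ ((R₂ * R₁) *ᵥ x)) ⬝ᵥ A *ᵥ (R₁ *ᵥ z) := by
        rw [mulVec_mulVec _ R₂, ← Matrix.mul_assoc, h₂₂.eq]
    _ = ((R₂ * R₁) *ᵥ x) ⬝ᵥ A *ᵥ ((R₂ * R₁) *ᵥ z) := by
        rw [mulVec_dotProduct_mulVec_comm h₂, mulVec_mulVec z R₂ R₁]

variable [DecidableEq ι]

lemma one_sub_mulVec_dotProduct_self (hM : Mᵀ * A = A * M) (hMM : IsIdempotentElem M)
    (x : ι → ℝ) : ((1 - M) *ᵥ x) ⬝ᵥ A *ᵥ ((1 - M) *ᵥ x) =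
      x ⬝ᵥ A *ᵥ x - (M *ᵥ x) ⬝ᵥ A *ᵥ (M *ᵥ x) := by
  have hcross := mulVec_dotProduct_mulVec_comm hM x x
  have hself := mulVec_dotProduct_mulVec_self hM hMM x
  simp only [sub_mulVec, one_mulVec, mulVec_sub, dotProduct_sub, sub_dotProduct]
  linear_combination -hcross + 2 * hself

lemma transpose_one_sub_mul (hM : Mᵀ * A = A * M) : (1 - M)ᵀ * A = A * (1 - M) := by
  rw [transpose_sub, transpose_one, Matrix.sub_mul, Matrix.mul_sub, hM, Matrix.one_mul,
    Matrix.mul_one]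

lemma one_sub_mul_one_sub_mul_one_sub_mulVec {Q R : Matrix ι ι ℝ} {x y : ι → ℝ} {γ : ℝ}
    (hQx : Q *ᵥ x = x) (hRy : R *ᵥ y = y) (hQy : Q *ᵥ y = γ • x) (hRx : R *ᵥ x = γ • y) :
    ((1 - Q) * (1 - R) * (1 - Q)) *ᵥ (y - γ • x) = γ ^ 2 • (y - γ • x) := by
  simp only [← mulVec_mulVec, sub_mulVec, one_mulVec, mulVec_sub, mulVec_smul, hQx, hRy, hQy,
    hRx]
  module

end SelfAdjoint

section Projection

variable {n m : ℕ} {A : Matrix (Fin n) (Fin n) ℝ} {S : Matrix (Fin n) (Fin m) ℝ}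

lemma proj_eq_mul : proj A S = S * ((Sᵀ * A * S)⁻¹ * Sᵀ * A) := by
  simp only [proj, Matrix.mul_assoc]

lemma proj_mulVec (y : Fin n → ℝ) :
    proj A S *ᵥ y = S *ᵥ ((Sᵀ * A * S)⁻¹ *ᵥ (Sᵀ *ᵥ (A *ᵥ y))) := by
  simp only [proj_eq_mul, mulVec_mulVec, Matrix.mul_assoc]

lemma proj_mul_self (hS : IsUnit (Sᵀ * A * S).det) : proj A S * S = S := by
  simp only [proj, Matrix.mul_assoc]
  rw [← Matrix.mul_assoc Sᵀ A S, nonsing_inv_mul _ hS, Matrix.mul_one]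

lemma transpose_mul_mul_proj (hS : IsUnit (Sᵀ * A * S).det) : Sᵀ * A * proj A S = Sᵀ * A := by
  simp only [proj, ← Matrix.mul_assoc]
  rw [mul_nonsing_inv _ hS, Matrix.one_mul]

lemma isIdempotentElem_proj (hS : IsUnit (Sᵀ * A * S).det) : IsIdempotentElem (proj A S) := by
  rw [IsIdempotentElem]
  nth_rewrite 2 [proj_eq_mul]
  rw [← Matrix.mul_assoc, proj_mul_self hS, ← proj_eq_mul]

lemma transpose_proj_mul (hA : Aᵀ = A) : (proj A S)ᵀ * A = A * proj A S := by
  simp only [proj, transpose_mul, transpose_transpose, transpose_nonsing_inv, hA,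
    Matrix.mul_assoc]

lemma proj_mulVec_mulVec (hS : IsUnit (Sᵀ * A * S).det) (a : Fin m → ℝ) :
    proj A S *ᵥ (S *ᵥ a) = S *ᵥ a := by
  rw [mulVec_mulVec, proj_mul_self hS]

lemma transpose_mulVec_mulVec_one_sub_proj (hS : IsUnit (Sᵀ * A * S).det) (x : Fin n → ℝ) :
    Sᵀ *ᵥ (A *ᵥ ((1 - proj A S) *ᵥ x)) = 0 := by
  rw [mulVec_mulVec, mulVec_mulVec, Matrix.mul_sub, Matrix.mul_one, transpose_mul_mul_proj hS,
    sub_self, zero_mulVec]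

end Projection

section ANorm

variable {n : ℕ} {A B : Matrix (Fin n) (Fin n) ℝ}

lemma eNorm_pos (hA : A.PosDef) {v : Fin n → ℝ} (hv : v ≠ 0) : 0 < eNorm A v :=
  Real.sqrt_pos.mpr (hA.dotProduct_mulVec_self_pos hv)

lemma eNorm_mulVec_le {c : ℝ} (hc : 0 ≤ c) {v : Fin n → ℝ}
    (h : (B *ᵥ v) ⬝ᵥ A *ᵥ (B *ᵥ v) ≤ c ^ 2 * (v ⬝ᵥ A *ᵥ v)) :
    eNorm A (B *ᵥ v) ≤ c * eNorm A v := by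
  calc eNorm A (B *ᵥ v) ≤ √(c ^ 2 * (v ⬝ᵥ A *ᵥ v)) := Real.sqrt_le_sqrt h
    _ = c * eNorm A v := by rw [Real.sqrt_mul (sq_nonneg c), Real.sqrt_sq hc, eNorm]

lemma aNorm_nonneg : 0 ≤ aNorm A B :=
  Real.sSup_nonneg <| by
    rintro r ⟨v, -, rfl⟩
    exact div_nonneg (Real.sqrt_nonneg _) (Real.sqrt_nonneg _)

lemma aNorm_le (hA : A.PosDef) {c : ℝ} (hc : 0 ≤ c)
    (h : ∀ v, (B *ᵥ v) ⬝ᵥ A *ᵥ (B *ᵥ v) ≤ c ^ 2 * (v ⬝ᵥ A *ᵥ v)) : aNorm A B ≤ c := by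
  refine Real.sSup_le ?_ hc
  rintro r ⟨v, hv, rfl⟩
  rw [div_le_iff₀ (eNorm_pos hA hv)]
  exact eNorm_mulVec_le hc (h v)

lemma aNorm_eq_of_mulVec_eq_smul (hA : A.PosDef) {c : ℝ} (hc : 0 ≤ c)
    (h : ∀ v, (B *ᵥ v) ⬝ᵥ A *ᵥ (B *ᵥ v) ≤ c ^ 2 * (v ⬝ᵥ A *ᵥ v))
    {v : Fin n → ℝ} (hv : v ≠ 0) (hBv : B *ᵥ v = c • v) : aNorm A B = c := by
  refine le_antisymm (aNorm_le hA hc h) (le_csSup ⟨c, ?_⟩ ⟨v, hv, ?_⟩)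
  · rintro r ⟨w, hw, rfl⟩
    rw [div_le_iff₀ (eNorm_pos hA hw)]
    exact eNorm_mulVec_le hc (h w)
  · have hBv' : (B *ᵥ v) ⬝ᵥ A *ᵥ (B *ᵥ v) = c ^ 2 * (v ⬝ᵥ A *ᵥ v) := by
      rw [hBv, mulVec_smul, dotProduct_smul, smul_dotProduct, smul_eq_mul, smul_eq_mul]
      ring
    rw [eNorm, hBv', Real.sqrt_mul (sq_nonneg c), Real.sqrt_sq hc, ← eNorm,
      mul_div_cancel_right₀ _ (eNorm_pos hA hv).ne']

end ANorm

section Complement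

variable {n k l : ℕ} {S : Matrix (Fin n) (Fin k) ℝ} {P : Matrix (Fin n) (Fin l) ℝ}

lemma bijective_fromCols_mulVec (hkl : k + l = n) (hSP : (fromCols S P).rank = n) :
    Function.Bijective (fromCols S P).mulVec := by
  have hsurj : Function.Surjective (fromCols S P).mulVecLin := by
    rw [← LinearMap.range_eq_top]
    apply Submodule.eq_top_of_finrank_eq
    rw [Module.finrank_fin_fun]
    exact hSP
  refine ⟨(LinearMap.injective_iff_surjective_of_finrank_eq_finrank ?_).mpr hsurj, hsurj⟩
  simp [hkl]

lemma exists_mulVec_add_mulVec_eq (h : Function.Surjective (fromCols S P).mulVec)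
    (u : Fin n → ℝ) : ∃ a b, S *ᵥ a + P *ᵥ b = u := by
  obtain ⟨w, rfl⟩ := h u
  exact ⟨w ∘ Sum.inl, w ∘ Sum.inr, by
    rw [← fromCols_mulVec_sumElim, Sum.elim_comp_inl_inr]⟩

lemma eq_zero_of_mulVec_add_mulVec_eq_zero (h : Function.Injective (fromCols S P).mulVec)
    {a : Fin k → ℝ} {b : Fin l → ℝ} (hab : S *ᵥ a + P *ᵥ b = 0) : a = 0 ∧ b = 0 := by
  have helim : Sum.elim a b = Sum.elim (0 : Fin k → ℝ) (0 : Fin l → ℝ) :=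
    h (by rw [fromCols_mulVec_sumElim, fromCols_mulVec_sumElim, hab, mulVec_zero,
      mulVec_zero, add_zero])
  exact ⟨funext fun i => congrFun helim (.inl i), funext fun j => congrFun helim (.inr j)⟩

lemma injective_mulVec_left (h : Function.Injective (fromCols S P).mulVec) :
    Function.Injective S.mulVec := fun a a' haa' =>
  sub_eq_zero.mp (eq_zero_of_mulVec_add_mulVec_eq_zero h (b := 0) (by
    rw [mulVec_sub, haa', sub_self, mulVec_zero, add_zero])).1

lemma injective_mulVec_right (h : Function.Injective (fromCols S P).mulVec) :
    Function.Injective P.mulVec := fun b b' hbb' =>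
  sub_eq_zero.mp (eq_zero_of_mulVec_add_mulVec_eq_zero h (a := 0) (by
    rw [mulVec_sub, hbb', sub_self, mulVec_zero, add_zero])).2

end Complement

section CBS

variable {n ns nc : ℕ} (A : Matrix (Fin n) (Fin n) ℝ) (S : Matrix (Fin n) (Fin ns) ℝ)
  (P : Matrix (Fin n) (Fin nc) ℝ)

noncomputable def cbsRatio (a : Fin ns → ℝ) (b : Fin nc → ℝ) : ℝ :=
  a ⬝ᵥ (Sᵀ * A * P) *ᵥ b / √((a ⬝ᵥ (Sᵀ * A * S) *ᵥ a) * (b ⬝ᵥ (Pᵀ * A * P) *ᵥ b))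

def cbsRatios : Set ℝ :=
  {r | ∃ vs : Fin ns → ℝ, ∃ vc : Fin nc → ℝ, vs ≠ 0 ∧ vc ≠ 0 ∧ r = cbsRatio A S P vs vc}

noncomputable def cbs : ℝ :=
  sSup (cbsRatios A S P)

def CBSInequality (γ : ℝ) : Prop :=
  ∀ a b, (S *ᵥ a) ⬝ᵥ A *ᵥ (P *ᵥ b) ≤
    γ * √(((S *ᵥ a) ⬝ᵥ A *ᵥ (S *ᵥ a)) * ((P *ᵥ b) ⬝ᵥ A *ᵥ (P *ᵥ b)))

lemma cbsRatio_smul {c d : ℝ} (hc : 0 < c) (hd : 0 < d) (a : Fin ns → ℝ) (b : Fin nc → ℝ) :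
    cbsRatio A S P (c • a) (d • b) = cbsRatio A S P a b := by
  simp only [cbsRatio, mulVec_smul, dotProduct_smul, smul_dotProduct, smul_eq_mul]
  rw [show c * (c * (a ⬝ᵥ (Sᵀ * A * S) *ᵥ a)) * (d * (d * (b ⬝ᵥ (Pᵀ * A * P) *ᵥ b))) =
      (c * d) ^ 2 * ((a ⬝ᵥ (Sᵀ * A * S) *ᵥ a) * (b ⬝ᵥ (Pᵀ * A * P) *ᵥ b)) by ring,
    Real.sqrt_mul (sq_nonneg _), Real.sqrt_sq (by positivity), ← mul_assoc, mul_comm d c,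
    mul_div_mul_left _ _ (by positivity)]

lemma cbsRatios_eq_image :
    cbsRatios A S P =
      Function.uncurry (cbsRatio A S P) '' (Metric.sphere 0 1 ×ˢ Metric.sphere 0 1) := by
  ext r
  constructor
  · rintro ⟨a, b, ha, hb, rfl⟩
    refine ⟨(‖a‖⁻¹ • a, ‖b‖⁻¹ • b), ⟨?_, ?_⟩,
      cbsRatio_smul A S P (inv_pos.mpr (norm_pos_iff.mpr ha)) (inv_pos.mpr (norm_pos_iff.mpr hb))
        a b⟩
    · rw [mem_sphere_zero_iff_norm, norm_smul, norm_inv, norm_norm,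
        inv_mul_cancel₀ (norm_ne_zero_iff.mpr ha)]
    · rw [mem_sphere_zero_iff_norm, norm_smul, norm_inv, norm_norm,
        inv_mul_cancel₀ (norm_ne_zero_iff.mpr hb)]
  · rintro ⟨⟨a, b⟩, ⟨ha, hb⟩, rfl⟩
    refine ⟨a, b, ?_, ?_, rfl⟩
    · exact ne_zero_of_mem_sphere one_ne_zero ⟨a, ha⟩
    · exact ne_zero_of_mem_sphere one_ne_zero ⟨b, hb⟩

variable {A S P}

lemma isCompact_cbsRatios (hA : A.PosDef) (hS : Function.Injective S.mulVec)
    (hP : Function.Injective P.mulVec) : IsCompact (cbsRatios A S P) := by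
  rw [cbsRatios_eq_image]
  refine ((isCompact_sphere 0 1).prod (isCompact_sphere 0 1)).image_of_continuousOn ?_
  refine (Continuous.continuousOn (by fun_prop)).div (Continuous.continuousOn (by fun_prop)) ?_
  rintro ⟨a, b⟩ ⟨ha, hb⟩
  have ha0 : a ≠ 0 := ne_zero_of_mem_sphere one_ne_zero ⟨a, ha⟩
  have hb0 : b ≠ 0 := ne_zero_of_mem_sphere one_ne_zero ⟨b, hb⟩
  exact Real.sqrt_ne_zero'.mpr (mul_pos
    ((hA.transpose_mul_mul_same hS).dotProduct_mulVec_self_pos ha0)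
    ((hA.transpose_mul_mul_same hP).dotProduct_mulVec_self_pos hb0))

lemma cbsInequality_cbs (hA : A.PosDef) (hS : Function.Injective S.mulVec)
    (hP : Function.Injective P.mulVec) : CBSInequality A S P (cbs A S P) := by
  intro a b
  simp only [mulVec_dotProduct_mul_mulVec]
  rcases eq_or_ne a 0 with rfl | ha
  · simp
  rcases eq_or_ne b 0 with rfl | hb
  · simp
  rw [← div_le_iff₀ (Real.sqrt_pos.mpr (mul_pos
    ((hA.transpose_mul_mul_same hS).dotProduct_mulVec_self_pos ha)
    ((hA.transpose_mul_mul_same hP).dotProduct_mulVec_self_pos hb)))]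
  exact le_csSup (isCompact_cbsRatios hA hS hP).bddAbove ⟨a, b, ha, hb, rfl⟩

lemma exists_cbs_eq_mulVec_dotProduct (hA : A.PosDef) (hS : Function.Injective S.mulVec)
    (hP : Function.Injective P.mulVec) (hne : (cbsRatios A S P).Nonempty) :
    ∃ a b, (S *ᵥ a) ⬝ᵥ A *ᵥ (S *ᵥ a) = 1 ∧ (P *ᵥ b) ⬝ᵥ A *ᵥ (P *ᵥ b) = 1 ∧
      (S *ᵥ a) ⬝ᵥ A *ᵥ (P *ᵥ b) = cbs A S P := by
  obtain ⟨a, b, ha, hb, hab⟩ := (isCompact_cbsRatios hA hS hP).sSup_mem hne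
  have hqa := (hA.transpose_mul_mul_same hS).dotProduct_mulVec_self_pos ha
  have hqb := (hA.transpose_mul_mul_same hP).dotProduct_mulVec_self_pos hb
  have ha' := inv_sqrt_smul_dotProduct_mulVec hqa
  have hb' := inv_sqrt_smul_dotProduct_mulVec hqb
  refine ⟨_, _, by rwa [mulVec_dotProduct_mul_mulVec], by rwa [mulVec_dotProduct_mul_mulVec], ?_⟩
  rw [mulVec_dotProduct_mul_mulVec, cbs, hab, ← cbsRatio_smul A S P
    (inv_pos.mpr (Real.sqrt_pos.mpr hqa)) (inv_pos.mpr (Real.sqrt_pos.mpr hqb)), cbsRatio, ha',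
    hb', mul_one, Real.sqrt_one, div_one]

end CBS

section TwoLevel

variable {n ns nc : ℕ} {A : Matrix (Fin n) (Fin n) ℝ} {S : Matrix (Fin n) (Fin ns) ℝ}
  {P : Matrix (Fin n) (Fin nc) ℝ} {γ : ℝ}

lemma one_sub_proj_mulVec_dotProduct_le (hA : A.PosDef) (hP : IsUnit (Pᵀ * A * P).det)
    (hspan : ∀ u, ∃ a b, S *ᵥ a + P *ᵥ b = u) (hγ : CBSInequality A S P γ) {u : Fin n → ℝ}
    (hu : Sᵀ *ᵥ (A *ᵥ u) = 0) :
    ((1 - proj A P) *ᵥ u) ⬝ᵥ A *ᵥ ((1 - proj A P) *ᵥ u) ≤ γ ^ 2 * (u ⬝ᵥ A *ᵥ u) := by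
  have hAs : Aᵀ = A := hA.isHermitian
  have hR := transpose_proj_mul (S := P) hAs
  obtain ⟨a, b, rfl⟩ := hspan u
  set u := S *ᵥ a + P *ᵥ b
  have horth : u ⬝ᵥ A *ᵥ (S *ᵥ a) = 0 := by
    rw [dotProduct_mulVec_comm hAs, dotProduct_comm, ← dotProduct_transpose_mulVec, hu,
      dotProduct_zero]
  have hu_eq : u ⬝ᵥ A *ᵥ u = (proj A P *ᵥ u) ⬝ᵥ A *ᵥ (P *ᵥ b) := by
    calc u ⬝ᵥ A *ᵥ u = u ⬝ᵥ A *ᵥ (S *ᵥ a) + u ⬝ᵥ A *ᵥ (P *ᵥ b) := by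
          rw [← dotProduct_add, ← mulVec_add]
      _ = u ⬝ᵥ A *ᵥ (proj A P *ᵥ (P *ᵥ b)) := by rw [horth, zero_add, proj_mulVec_mulVec hP]
      _ = (proj A P *ᵥ u) ⬝ᵥ A *ᵥ (P *ᵥ b) := (mulVec_dotProduct_mulVec_comm hR _ _).symm
  have hcs := hA.posSemidef.sq_dotProduct_mulVec_le (proj A P *ᵥ u) (P *ᵥ b)
  have hlow : (1 - γ ^ 2) * ((P *ᵥ b) ⬝ᵥ A *ᵥ (P *ᵥ b)) ≤ u ⬝ᵥ A *ᵥ u := by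
    refine one_sub_sq_mul_le_add_dotProduct_mulVec hA.posSemidef ?_
    have h := hγ (-a) b
    rwa [mulVec_neg, neg_dotProduct, mulVec_neg, dotProduct_neg, neg_dotProduct, neg_neg] at h
  have hu0 := hA.posSemidef.dotProduct_mulVec_self_nonneg u
  have hπ0 := hA.posSemidef.dotProduct_mulVec_self_nonneg (proj A P *ᵥ u)
  rw [← hu_eq] at hcs
  rw [one_sub_mulVec_dotProduct_self hR (isIdempotentElem_proj hP)]
  suffices (1 - γ ^ 2) * (u ⬝ᵥ A *ᵥ u) ≤ (proj A P *ᵥ u) ⬝ᵥ A *ᵥ (proj A P *ᵥ u) by linarith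
  rcases hu0.eq_or_lt with hzero | hpos
  · rw [← hzero, mul_zero]
    exact hπ0
  refine le_of_mul_le_mul_right ?_ hpos
  rcases le_or_gt (1 - γ ^ 2) 0 with hγ1 | hγ1
  · nlinarith
  · nlinarith [mul_le_mul_of_nonneg_left hcs hγ1.le, mul_le_mul_of_nonneg_left hlow hπ0]

lemma tlhb_mulVec_dotProduct_self_le (hA : A.PosDef) (hS : IsUnit (Sᵀ * A * S).det)
    (hP : IsUnit (Pᵀ * A * P).det) (hspan : ∀ u, ∃ a b, S *ᵥ a + P *ᵥ b = u)
    (hγ : CBSInequality A S P γ) (x : Fin n → ℝ) :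
    (((1 - proj A S) * (1 - proj A P) * (1 - proj A S)) *ᵥ x) ⬝ᵥ A *ᵥ
        (((1 - proj A S) * (1 - proj A P) * (1 - proj A S)) *ᵥ x) ≤
      (γ ^ 2) ^ 2 * (x ⬝ᵥ A *ᵥ x) := by
  have hAs : Aᵀ = A := hA.isHermitian
  have hQ := transpose_proj_mul (S := S) hAs
  have hR := transpose_proj_mul (S := P) hAs
  refine mulVec_dotProduct_self_le_of_adjoint_mul_self hA.posSemidef
    (mul_mul_mulVec_dotProduct_s3 (transpose_one_sub_mul hQ) (transpose_one_sub_mul hR)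
      (isIdempotentElem_proj hP).one_sub) (sq_nonneg γ) (fun y => ?_) x
  have hy := one_sub_mulVec_dotProduct_self hQ (isIdempotentElem_proj hS) y
  have hQy := hA.posSemidef.dotProduct_mulVec_self_nonneg (proj A S *ᵥ y)
  rw [← mulVec_mulVec]
  calc _ ≤ γ ^ 2 * (((1 - proj A S) *ᵥ y) ⬝ᵥ A *ᵥ ((1 - proj A S) *ᵥ y)) :=
        one_sub_proj_mulVec_dotProduct_le hA hP hspan hγ
          (transpose_mulVec_mulVec_one_sub_proj hS y)
    _ ≤ γ ^ 2 * (y ⬝ᵥ A *ᵥ y) := by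
        gcongr
        linarith

/- With `x = S a` and `Q = proj A S`: maximality of `⟨x, y⟩_A` bounds `‖Q y‖_A ≤ γ`, while
`⟨x, Q y⟩_A = γ`; hence `‖Q y - γ x‖_A² = ‖Q y‖_A² - γ² ≤ 0`. -/
lemma proj_mulVec_eq_smul_of_dotProduct_eq {m : ℕ} {S : Matrix (Fin n) (Fin m) ℝ}
    (hA : A.PosDef) (hS : IsUnit (Sᵀ * A * S).det) {a : Fin m → ℝ} {y : Fin n → ℝ}
    (hγ : ∀ a', (S *ᵥ a') ⬝ᵥ A *ᵥ y ≤ γ * √((S *ᵥ a') ⬝ᵥ A *ᵥ (S *ᵥ a')))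
    (ha : (S *ᵥ a) ⬝ᵥ A *ᵥ (S *ᵥ a) = 1) (hay : (S *ᵥ a) ⬝ᵥ A *ᵥ y = γ) :
    proj A S *ᵥ y = γ • (S *ᵥ a) := by
  have hAs : Aᵀ = A := hA.isHermitian
  have hQ := transpose_proj_mul (S := S) hAs
  set z := proj A S *ᵥ y
  have hzz : z ⬝ᵥ A *ᵥ z = z ⬝ᵥ A *ᵥ y := by
    rw [mulVec_dotProduct_mulVec_self hQ (isIdempotentElem_proj hS), dotProduct_mulVec_comm hAs]
  have hzy : z ⬝ᵥ A *ᵥ y ≤ γ * √(z ⬝ᵥ A *ᵥ z) := by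
    rw [show z = S *ᵥ _ from proj_mulVec y]
    exact hγ _
  have haz : (S *ᵥ a) ⬝ᵥ A *ᵥ z = γ := by
    rw [← mulVec_dotProduct_mulVec_comm hQ, proj_mulVec_mulVec hS, hay]
  have hza := dotProduct_mulVec_comm hAs z (S *ᵥ a)
  have hz0 := hA.posSemidef.dotProduct_mulVec_self_nonneg z
  have hzz_le : z ⬝ᵥ A *ᵥ z ≤ γ ^ 2 := by
    have hsq := Real.sq_sqrt hz0
    nlinarith [Real.sqrt_nonneg (z ⬝ᵥ A *ᵥ z)]
  by_contra hne
  have hpos := hA.dotProduct_mulVec_self_pos (sub_ne_zero.mpr hne)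
  simp only [mulVec_sub, mulVec_smul, dotProduct_sub, sub_dotProduct, dotProduct_smul,
    smul_dotProduct, smul_eq_mul, haz, hza, ha] at hpos
  nlinarith

lemma tlhb_mulVec_eq_sq_smul (hA : A.PosDef) (hS : IsUnit (Sᵀ * A * S).det)
    (hP : IsUnit (Pᵀ * A * P).det) (hγ : CBSInequality A S P γ) {a : Fin ns → ℝ}
    {b : Fin nc → ℝ} (ha : (S *ᵥ a) ⬝ᵥ A *ᵥ (S *ᵥ a) = 1) (hb : (P *ᵥ b) ⬝ᵥ A *ᵥ (P *ᵥ b) = 1)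
    (hab : (S *ᵥ a) ⬝ᵥ A *ᵥ (P *ᵥ b) = γ) :
    ((1 - proj A S) * (1 - proj A P) * (1 - proj A S)) *ᵥ (P *ᵥ b - γ • S *ᵥ a) =
      γ ^ 2 • (P *ᵥ b - γ • S *ᵥ a) := by
  have hAs : Aᵀ = A := hA.isHermitian
  refine one_sub_mul_one_sub_mul_one_sub_mulVec (proj_mulVec_mulVec hS a)
    (proj_mulVec_mulVec hP b) (proj_mulVec_eq_smul_of_dotProduct_eq hA hS (fun a' => ?_) ha hab)
    (proj_mulVec_eq_smul_of_dotProduct_eq hA hP (fun b' => ?_) hb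
      (by rwa [dotProduct_mulVec_comm hAs]))
  · have h := hγ a' b
    rwa [hb, mul_one] at h
  · have h := hγ a b'
    rwa [ha, one_mul, dotProduct_mulVec_comm hAs] at h

end TwoLevel

theorem exact_tlhb_cbs_general {n ns nc : ℕ}
    (A : Matrix (Fin n) (Fin n) ℝ) (hA : A.PosDef)
    (S : Matrix (Fin n) (Fin ns) ℝ)
    (P : Matrix (Fin n) (Fin nc) ℝ)
    (hsq : ns + nc = n)
    (hSP : (fromCols S P).rank = n) :
    aNorm A ((1 - S * (Sᵀ * A * S)⁻¹ * Sᵀ * A) * (1 - proj A P) *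
        (1 - S * (Sᵀ * A * S)⁻¹ * Sᵀ * A)) =
      (sSup {r : ℝ | ∃ vs : Fin ns → ℝ, ∃ vc : Fin nc → ℝ, vs ≠ 0 ∧ vc ≠ 0 ∧
        r = vs ⬝ᵥ (Sᵀ * A * P).mulVec vc /
          Real.sqrt ((vs ⬝ᵥ (Sᵀ * A * S).mulVec vs) * (vc ⬝ᵥ (Pᵀ * A * P).mulVec vc))}) ^ 2 := by
  change aNorm A ((1 - proj A S) * (1 - proj A P) * (1 - proj A S)) = cbs A S P ^ 2
  obtain ⟨hinj, hsurj⟩ := bijective_fromCols_mulVec hsq hSP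
  have hS := injective_mulVec_left hinj
  have hP := injective_mulVec_right hinj
  have hSS := (hA.transpose_mul_mul_same hS).det_pos.ne'.isUnit
  have hPP := (hA.transpose_mul_mul_same hP).det_pos.ne'.isUnit
  have hγ := cbsInequality_cbs hA hS hP
  have hE := tlhb_mulVec_dotProduct_self_le hA hSS hPP (exists_mulVec_add_mulVec_eq hsurj) hγ
  rcases (cbsRatios A S P).eq_empty_or_nonempty with hempty | hne
  · refine le_antisymm (aNorm_le hA (sq_nonneg _) hE) ?_
    rw [cbs, hempty, Real.sSup_empty, sq, mul_zero]
    exact aNorm_nonneg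
  obtain ⟨a, b, ha, hb, hab⟩ := exists_cbs_eq_mulVec_dotProduct hA hS hP hne
  refine aNorm_eq_of_mulVec_eq_smul hA (sq_nonneg _) hE (fun hv => ?_)
    (tlhb_mulVec_eq_sq_smul hA hSS hPP hγ ha hb hab)
  have hb0 := (eq_zero_of_mulVec_add_mulVec_eq_zero hinj (a := -cbs A S P • a) (b := b)
    (by rw [mulVec_smul, neg_smul, neg_add_eq_sub, hv])).2
  simp [hb0] at hb

/-- If `(S P)` is square (`n_s + n_c = n`) and nonsingular, and the smoother is
`M_s = A_s = Sᵀ A S`, then `‖E_TL‖_A = γ²`, where `γ` is the C.B.S. constant. -/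
theorem exact_tlhb_cbs {n ns nc : ℕ}
    (A : Matrix (Fin n) (Fin n) ℝ) (hA : A.PosDef)
    (S : Matrix (Fin n) (Fin ns) ℝ) (hS : S.rank = ns)
    (P : Matrix (Fin n) (Fin nc) ℝ) (hP : P.rank = nc)
    (hnc : nc = n - ns) (hsq : ns + nc = n)
    (hSP : (fromCols S P).rank = n) :
    aNorm A ((1 - S * (Sᵀ * A * S)⁻¹ * Sᵀ * A) * (1 - proj A P) *
        (1 - S * (Sᵀ * A * S)⁻¹ * Sᵀ * A)) =
      (sSup {r : ℝ | ∃ vs : Fin ns → ℝ, ∃ vc : Fin nc → ℝ, vs ≠ 0 ∧ vc ≠ 0 ∧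
        r = vs ⬝ᵥ (Sᵀ * A * P).mulVec vc /
          Real.sqrt ((vs ⬝ᵥ (Sᵀ * A * S).mulVec vs) * (vc ⬝ᵥ (Pᵀ * A * P).mulVec vc))}) ^ 2 :=
  exact_tlhb_cbs_general A hA S P hsq hSP
end

section
/- Let P̂ be an n×n̂_c real matrix of full column rank with n_c ≤ n̂_c < n such that (S P̂) has full row rank n. If the column space of P is contained in the column space of P̂, then σ_TL ≤ σ̂_TL, where σ_TL = λ_min^+( S M̃_s^{-1} S^T A (I − P (P^T A P)^{-1} P^T A) ) and σ̂_TL = λ_min^+( S M̃_s^{-1} S^T A (I − P̂ (P̂^T A P̂)^{-1} P̂^T A) ). Consequently the exact TLHB convergence factor does not increase when P is enlarged. -/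
open Matrix

/-!
Let `C` be any invertible matrix with `Cᵀ C = A` (e.g. `A^{1/2}`). Conjugation by `C` turns the
`A`-orthogonal projection `Π_A` onto `range P` into the Euclidean orthogonal projection `Π` onto
`range (C P)`, the smoother `S M̃_s⁻¹ Sᵀ A` into the positive semidefinite `Y = (C S) M̃_s⁻¹ (C S)ᵀ`,
the exact two-level iteration matrix into `Gᵀ R G` with `R = 1 - Π`, and the `A`-norm into the
spectral norm.

Since `R` is idempotent, the nonzero spectrum of `Y R` is that of `R Y R`. Because `(S P)` has full
row rank, the kernel of `R Y R` is exactly `range Π`, so `λ_min⁺(R Y R)` is the minimum of the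
Rayleigh quotient of `Y` over `range R`. Enlarging the coarse space shrinks `range R`, which can
only raise this minimum. For the norm, `‖Gᵀ R G‖ = ‖R G‖²`, and `R̂ G = R̂ (R G)` with `‖R̂‖ ≤ 1`.
-/

open scoped Matrix.Norms.L2Operator

lemma Matrix.mulVec_injective_of_rank_eq_s6 {K m l : Type*} [Field K] [Fintype l] {M : Matrix m l K}
    (h : M.rank = Fintype.card l) : Function.Injective M.mulVec := by
  rw [mulVec_injective_iff, linearIndependent_iff_card_eq_finrank_span, ← h,
    rank_eq_finrank_span_cols]
  rfl

lemma Matrix.range_mulVecLin_mul_le {K l m o : Type*} [Field K] [Fintype m] [Fintype o]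
    (P : Matrix l m K) (X : Matrix m o K) :
    LinearMap.range (P * X).mulVecLin ≤ LinearMap.range P.mulVecLin := by
  rw [mulVecLin_mul]
  exact LinearMap.range_comp_le_range _ _

lemma Matrix.range_mulVecLin_mul_mono {K l m o p : Type*} [Field K] [Fintype l] [Fintype o]
    [Fintype p] (C : Matrix m l K) {P : Matrix l o K} {Q : Matrix l p K}
    (h : LinearMap.range P.mulVecLin ≤ LinearMap.range Q.mulVecLin) :
    LinearMap.range (C * P).mulVecLin ≤ LinearMap.range (C * Q).mulVecLin := by
  simpa only [mulVecLin_mul, LinearMap.range_comp] using Submodule.map_mono h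

lemma Matrix.PosDef.transpose_mulVec_eq_zero {m k : Type*} [Fintype m] [Fintype k]
    {M : Matrix k k ℝ} (hM : M.PosDef) (B : Matrix m k ℝ) {x : m → ℝ}
    (hx : (B * M * Bᵀ) *ᵥ x = 0) : Bᵀ *ᵥ x = 0 := by
  by_contra hne
  have hpos := hM.dotProduct_mulVec_pos hne
  rw [star_trivial, mulVec_transpose, ← dotProduct_mulVec, mulVec_mulVec, ← mulVec_transpose,
    mulVec_mulVec, hx, dotProduct_zero] at hpos
  exact hpos.false

lemma Matrix.PosSemidef.mul_mul_transpose_same {m k : Type*} [Fintype m] [Fintype k]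
    {M : Matrix k k ℝ} (hM : M.PosSemidef) (B : Matrix m k ℝ) : (B * M * Bᵀ).PosSemidef := by
  simpa [conjTranspose_eq_transpose_of_trivial] using hM.mul_mul_conjTranspose_same B

lemma Matrix.exists_mulVec_eq_smul_of_mem_spectrum {n : Type*} [Fintype n] [DecidableEq n]
    {T : Matrix n n ℝ} {t : ℝ} (ht : t ∈ spectrum ℝ T) : ∃ v, v ≠ 0 ∧ T *ᵥ v = t • v := by
  rw [← spectrum_toLin', ← Module.End.hasEigenvalue_iff_mem_spectrum] at ht
  obtain ⟨v, hv⟩ := ht.exists_hasEigenvector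
  exact ⟨v, hv.2, by simpa using hv.apply_eq_smul⟩

section Eigenbasis

variable {n : Type*} [Fintype n] [DecidableEq n] {T : Matrix n n ℝ}

lemma Matrix.IsHermitian.eq_sum_eigenvectorBasis (hT : T.IsHermitian) (v : n → ℝ) :
    v = ∑ i, ((hT.eigenvectorBasis i).ofLp ⬝ᵥ v) • (hT.eigenvectorBasis i).ofLp := by
  have := congrArg WithLp.ofLp ((hT.eigenvectorBasis).sum_repr' (WithLp.toLp 2 v))
  simpa [EuclideanSpace.inner_eq_star_dotProduct, dotProduct_comm] using this.symm

lemma Matrix.IsHermitian.dotProduct_self_eq_sum (hT : T.IsHermitian) (v : n → ℝ) :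
    v ⬝ᵥ v = ∑ i, ((hT.eigenvectorBasis i).ofLp ⬝ᵥ v) ^ 2 := by
  conv_lhs => enter [2]; rw [hT.eq_sum_eigenvectorBasis v]
  rw [dotProduct_sum]
  refine Finset.sum_congr rfl fun i _ => ?_
  rw [dotProduct_smul, smul_eq_mul, dotProduct_comm, sq]

lemma Matrix.IsHermitian.dotProduct_mulVec_eq_sum (hT : T.IsHermitian) (v : n → ℝ) :
    v ⬝ᵥ (T *ᵥ v) = ∑ i, hT.eigenvalues i * ((hT.eigenvectorBasis i).ofLp ⬝ᵥ v) ^ 2 := by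
  conv_lhs => enter [2, 2]; rw [hT.eq_sum_eigenvectorBasis v]
  rw [mulVec_sum, dotProduct_sum]
  refine Finset.sum_congr rfl fun i _ => ?_
  rw [mulVec_smul, hT.mulVec_eigenvectorBasis, dotProduct_smul, dotProduct_smul, smul_eq_mul,
    smul_eq_mul, dotProduct_comm v]
  ring

/-- The witness is the least eigenvalue among the eigenvectors in which `v` has a nonzero
coefficient; it is positive because `v` is orthogonal to the kernel. -/
lemma Matrix.PosSemidef.exists_pos_mem_spectrum_mul_le (hT : T.PosSemidef) {v : n → ℝ}
    (hv : v ≠ 0) (hperp : ∀ z, T *ᵥ z = 0 → v ⬝ᵥ z = 0) :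
    ∃ t ∈ spectrum ℝ T, 0 < t ∧ t * (v ⬝ᵥ v) ≤ v ⬝ᵥ (T *ᵥ v) := by
  set supp := Finset.univ.filter fun i => (hT.1.eigenvectorBasis i).ofLp ⬝ᵥ v ≠ 0
  have hsupp : supp.Nonempty := by
    by_contra h
    have hc : ∀ i, (hT.1.eigenvectorBasis i).ofLp ⬝ᵥ v = 0 := by
      simpa [supp, Finset.filter_nonempty_iff] using h
    exact hv (by rw [hT.1.eq_sum_eigenvectorBasis v]; simp [hc])
  obtain ⟨i₀, hi₀, hmin⟩ := supp.exists_min_image hT.1.eigenvalues hsupp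
  refine ⟨hT.1.eigenvalues i₀, hT.1.eigenvalues_mem_spectrum_real i₀, ?_, ?_⟩
  · refine (hT.eigenvalues_nonneg i₀).lt_of_ne fun h => (Finset.mem_filter.mp hi₀).2 ?_
    rw [dotProduct_comm]
    exact hperp _ (by rw [hT.1.mulVec_eigenvectorBasis, ← h, zero_smul])
  · rw [hT.1.dotProduct_self_eq_sum, hT.1.dotProduct_mulVec_eq_sum, Finset.mul_sum]
    refine Finset.sum_le_sum fun i _ => ?_
    by_cases hi : (hT.1.eigenvectorBasis i).ofLp ⬝ᵥ v = 0
    · simp [hi]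
    · exact mul_le_mul_of_nonneg_right (hmin i (by simp [supp, hi])) (sq_nonneg _)

end Eigenbasis

lemma ContinuousLinearMap.sSup_norm_apply_div_norm_eq {E F : Type*} [NormedAddCommGroup E]
    [NormedSpace ℝ E] [NormedAddCommGroup F] [NormedSpace ℝ F] (f : E →L[ℝ] F) :
    sSup {r : ℝ | ∃ v : E, v ≠ 0 ∧ r = ‖f v‖ / ‖v‖} = ‖f‖ := by
  rw [← f.sSup_sphere_eq_norm]
  congr 1
  ext r
  constructor
  · rintro ⟨v, hv, rfl⟩
    refine ⟨‖v‖⁻¹ • v, by simp [norm_smul, hv], ?_⟩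
    simp [norm_smul, div_eq_inv_mul]
  · rintro ⟨x, hx, rfl⟩
    have hx1 : ‖x‖ = 1 := by simpa using hx
    exact ⟨x, norm_ne_zero_iff.mp (by simp [hx1]), by simp [hx1]⟩

lemma IsStarProjection.norm_star_mul_mul_le_of_mul_eq {E : Type*} [NormedRing E] [StarRing E]
    [CStarRing E] {p q : E} (hp : IsStarProjection p) (hq : IsStarProjection q) (hpq : p * q = q)
    (g : E) : ‖star g * q * g‖ ≤ ‖star g * p * g‖ := by
  have hqp : q * p = q := by
    simpa [hp.isSelfAdjoint.star_eq, hq.isSelfAdjoint.star_eq] using congrArg star hpq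
  have hsq : ∀ r : E, IsStarProjection r → star g * r * g = star (r * g) * (r * g) := by
    intro r hr
    rw [star_mul, hr.isSelfAdjoint.star_eq, ← mul_assoc, mul_assoc (star g) r r,
      hr.isIdempotentElem.eq]
  have hle : ‖q * g‖ ≤ ‖p * g‖ :=
    calc ‖q * g‖ = ‖q * (p * g)‖ := by rw [← mul_assoc, hqp]
      _ ≤ ‖q‖ * ‖p * g‖ := norm_mul_le _ _
      _ ≤ ‖p * g‖ := mul_le_of_le_one_left (norm_nonneg _) (hq.norm_le)
  rw [hsq q hq, hsq p hp, CStarRing.norm_star_mul_self, CStarRing.norm_star_mul_self]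
  exact mul_self_le_mul_self (norm_nonneg _) hle

section StarProjection

variable {n : Type*} [Fintype n] {R : Matrix n n ℝ}

lemma IsStarProjection.transpose_eq (hR : IsStarProjection R) : Rᵀ = R := by
  simpa [star_eq_conjTranspose, conjTranspose_eq_transpose_of_trivial] using
    hR.isSelfAdjoint.star_eq

lemma IsStarProjection.mulVec_dotProduct (hR : IsStarProjection R) (x y : n → ℝ) :
    (R *ᵥ x) ⬝ᵥ y = x ⬝ᵥ (R *ᵥ y) := by
  rw [dotProduct_mulVec, ← mulVec_transpose, hR.transpose_eq]

end StarProjection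

namespace TwoLevel

section Projection

variable {n k : ℕ} {A : Matrix (Fin n) (Fin n) ℝ} {P : Matrix (Fin n) (Fin k) ℝ}

lemma range_proj_le : LinearMap.range (proj A P).mulVecLin ≤ LinearMap.range P.mulVecLin := by
  simpa only [proj, Matrix.mul_assoc] using range_mulVecLin_mul_le P _

lemma proj_mul_of_range_le (hP : IsUnit (Pᵀ * A * P).det) {l : ℕ} {Q : Matrix (Fin n) (Fin l) ℝ}
    (hQ : LinearMap.range Q.mulVecLin ≤ LinearMap.range P.mulVecLin) : proj A P * Q = Q := by
  have hfix : proj A P * P = P := by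
    rw [show proj A P * P = P * ((Pᵀ * A * P)⁻¹ * (Pᵀ * A * P)) by
      simp only [proj, Matrix.mul_assoc], nonsing_inv_mul _ hP, Matrix.mul_one]
  refine ext_iff_mulVec.mpr fun v => ?_
  obtain ⟨z, hz⟩ := hQ (LinearMap.mem_range_self Q.mulVecLin v)
  rw [mulVecLin_apply, mulVecLin_apply] at hz
  rw [← mulVec_mulVec, ← hz, mulVec_mulVec, hfix]

lemma transpose_mul_mul_proj (hP : IsUnit (Pᵀ * A * P).det) : Pᵀ * A * proj A P = Pᵀ * A := by
  rw [show Pᵀ * A * proj A P = (Pᵀ * A * P) * (Pᵀ * A * P)⁻¹ * (Pᵀ * A) by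
    simp only [proj, Matrix.mul_assoc], mul_nonsing_inv _ hP, Matrix.one_mul]

lemma one_sub_proj_ne_zero (hk : k < n) : 1 - proj A P ≠ 0 := by
  intro h
  have hrank : (proj A P).rank ≤ k := by
    simpa only [proj, Matrix.mul_assoc] using (rank_mul_le_left P _).trans P.rank_le_width
  rw [← sub_eq_zero.mp h, rank_one, Fintype.card_fin] at hrank
  omega

lemma isStarProjection_proj_one (hP : IsUnit (Pᵀ * (1 : Matrix (Fin n) (Fin n) ℝ) * P).det) :
    IsStarProjection (proj 1 P) where
  isIdempotentElem := proj_mul_of_range_le hP range_proj_le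
  isSelfAdjoint := by
    simp only [IsSelfAdjoint, star_eq_conjTranspose, conjTranspose_eq_transpose_of_trivial, proj,
      Matrix.mul_one, transpose_mul, transpose_nonsing_inv, transpose_transpose, Matrix.mul_assoc]

lemma one_sub_proj_one_mul_of_range_le {l : ℕ} {Q : Matrix (Fin n) (Fin l) ℝ}
    (hP : IsUnit (Pᵀ * (1 : Matrix (Fin n) (Fin n) ℝ) * P).det)
    (hQ : IsUnit (Qᵀ * (1 : Matrix (Fin n) (Fin n) ℝ) * Q).det)
    (hPQ : LinearMap.range P.mulVecLin ≤ LinearMap.range Q.mulVecLin) :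
    (1 - proj 1 P) * (1 - proj 1 Q) = 1 - proj 1 Q := by
  have hQP : proj 1 Q * proj 1 P = proj 1 P := proj_mul_of_range_le hQ (range_proj_le.trans hPQ)
  have hPQ' : proj 1 P * proj 1 Q = proj 1 P := by
    simpa [(isStarProjection_proj_one hP).isSelfAdjoint.star_eq,
      (isStarProjection_proj_one hQ).isSelfAdjoint.star_eq] using congrArg star hQP
  rw [sub_mul, one_mul, mul_sub, mul_one, hPQ']
  abel

end Projection

section Compression

variable {n : ℕ} {Y R : Matrix (Fin n) (Fin n) ℝ}

lemma lamMinPos_congr {X : Matrix (Fin n) (Fin n) ℝ}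
    (h : spectrum ℝ X \ {0} = spectrum ℝ Y \ {0}) : lamMinPos X = lamMinPos Y := by
  unfold lamMinPos
  congr 1
  ext t
  have ht := Set.ext_iff.mp h t
  simp only [Set.mem_sdiff, Set.mem_singleton_iff] at ht
  constructor <;> rintro ⟨hmem, hpos⟩
  · exact ⟨(ht.mp ⟨hmem, hpos.ne'⟩).1, hpos⟩
  · exact ⟨(ht.mpr ⟨hmem, hpos.ne'⟩).1, hpos⟩

lemma lamMinPos_le {X : Matrix (Fin n) (Fin n) ℝ} {t : ℝ} (ht : t ∈ spectrum ℝ X) (hpos : 0 < t) :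
    lamMinPos X ≤ t :=
  csInf_le ⟨0, fun _ h => h.2.le⟩ ⟨ht, hpos⟩

lemma lamMinPos_mul_eq_compress (hR : IsIdempotentElem R) :
    lamMinPos (Y * R) = lamMinPos (R * Y * R) :=
  lamMinPos_congr <|
    calc spectrum ℝ (Y * R) \ {0} = spectrum ℝ (Y * R * R) \ {0} := by
          rw [Matrix.mul_assoc, hR.eq]
      _ = spectrum ℝ (R * (Y * R)) \ {0} := spectrum.nonzero_mul_comm _ _
      _ = spectrum ℝ (R * Y * R) \ {0} := by rw [Matrix.mul_assoc]

lemma dotProduct_compress_mulVec (hR : IsStarProjection R) {v : Fin n → ℝ} (hv : R *ᵥ v = v) :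
    v ⬝ᵥ ((R * Y * R) *ᵥ v) = v ⬝ᵥ (Y *ᵥ v) := by
  rw [← mulVec_mulVec, hv, ← mulVec_mulVec, ← hR.mulVec_dotProduct, hv]

variable (hY : Y.PosSemidef) (hR : IsStarProjection R)
  (hker : ∀ x, R *ᵥ x = x → Y *ᵥ x = 0 → x = 0)
include hY hR hker

lemma dotProduct_eq_zero_of_compress_mulVec_eq_zero {v z : Fin n → ℝ} (hv : R *ᵥ v = v)
    (hz : (R * Y * R) *ᵥ z = 0) : v ⬝ᵥ z = 0 := by
  have hYRz : Y *ᵥ (R *ᵥ z) = 0 := by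
    rw [← hY.dotProduct_mulVec_zero_iff, star_trivial, hR.mulVec_dotProduct, mulVec_mulVec,
      mulVec_mulVec, hz, dotProduct_zero]
  have hRz : R *ᵥ z = 0 := hker _ (by rw [mulVec_mulVec, hR.isIdempotentElem.eq]) hYRz
  rw [← hv, hR.mulVec_dotProduct, hRz, dotProduct_zero]

lemma exists_pos_mem_spectrum_compress_mul_le {v : Fin n → ℝ} (hv0 : v ≠ 0) (hv : R *ᵥ v = v) :
    ∃ t ∈ spectrum ℝ (R * Y * R), 0 < t ∧ t * (v ⬝ᵥ v) ≤ v ⬝ᵥ (Y *ᵥ v) := by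
  have hRYR : (R * Y * R).PosSemidef := by
    simpa [hR.transpose_eq] using hY.mul_mul_conjTranspose_same R
  rw [← dotProduct_compress_mulVec hR hv]
  exact hRYR.exists_pos_mem_spectrum_mul_le hv0 fun z hz =>
    dotProduct_eq_zero_of_compress_mulVec_eq_zero hY hR hker hv hz

end Compression

/-- A positive eigenvalue of `R₂ Y R₂` is the Rayleigh quotient of `Y` at an eigenvector fixed by
`R₂`, hence by `R₁`, and the Rayleigh quotient of `R₁ Y R₁` there bounds `λ_min⁺(R₁ Y R₁)`. -/
theorem lamMinPos_mul_le_of_mul_eq {n : ℕ} {Y R₁ R₂ : Matrix (Fin n) (Fin n) ℝ}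
    (hY : Y.PosSemidef) (hR₁ : IsStarProjection R₁) (hR₂ : IsStarProjection R₂)
    (h₁₂ : R₁ * R₂ = R₂) (hker : ∀ x, R₁ *ᵥ x = x → Y *ᵥ x = 0 → x = 0) (hR₂0 : R₂ ≠ 0) :
    lamMinPos (Y * R₁) ≤ lamMinPos (Y * R₂) := by
  have hfix : ∀ v, R₂ *ᵥ v = v → R₁ *ᵥ v = v := fun v hv => by rw [← hv, mulVec_mulVec, h₁₂]
  have hker₂ : ∀ x, R₂ *ᵥ x = x → Y *ᵥ x = 0 → x = 0 := fun x hx => hker x (hfix x hx)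
  rw [lamMinPos_mul_eq_compress hR₁.isIdempotentElem,
    lamMinPos_mul_eq_compress hR₂.isIdempotentElem]
  obtain ⟨w, hw⟩ : ∃ w, R₂ *ᵥ w ≠ 0 := by
    by_contra! h
    exact hR₂0 (ext_iff_mulVec.mpr fun w => by simpa using h w)
  obtain ⟨t₀, ht₀, ht₀pos, -⟩ := exists_pos_mem_spectrum_compress_mul_le hY hR₂ hker₂ hw
    (by rw [mulVec_mulVec, hR₂.isIdempotentElem.eq])
  refine le_csInf ⟨t₀, ht₀, ht₀pos⟩ fun t ⟨ht, htpos⟩ => ?_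
  obtain ⟨v, hv0, hvt⟩ := exists_mulVec_eq_smul_of_mem_spectrum ht
  have hv : R₂ *ᵥ v = v := by
    have h : R₂ *ᵥ ((R₂ * Y * R₂) *ᵥ v) = (R₂ * Y * R₂) *ᵥ v := by
      rw [mulVec_mulVec, ← Matrix.mul_assoc, ← Matrix.mul_assoc, hR₂.isIdempotentElem.eq]
    rw [hvt, mulVec_smul] at h
    exact smul_right_injective _ htpos.ne' h
  obtain ⟨s, hs, hspos, hsle⟩ := exists_pos_mem_spectrum_compress_mul_le hY hR₁ hker hv0 (hfix v hv)
  have hray : v ⬝ᵥ (Y *ᵥ v) = t * (v ⬝ᵥ v) := by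
    rw [← dotProduct_compress_mulVec hR₂ hv, hvt, dotProduct_smul, smul_eq_mul]
  have hvv : 0 < v ⬝ᵥ v := by simpa using dotProduct_star_self_pos_iff.mpr hv0
  exact (lamMinPos_le hs hspos).trans
    (le_of_mul_le_mul_right (hsle.trans hray.le) hvv)

section Conjugation

variable {n : ℕ} {A C : Matrix (Fin n) (Fin n) ℝ}

open scoped MatrixOrder in
lemma exists_transpose_mul_self_eq (hA : A.PosDef) : ∃ C, Cᵀ * C = A ∧ IsUnit C.det := by
  have hsqrt : (CFC.sqrt A).PosSemidef := nonneg_iff_posSemidef.mp (CFC.sqrt_nonneg A)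
  have hmul : (CFC.sqrt A)ᵀ * CFC.sqrt A = A := by
    rw [← conjTranspose_eq_transpose_of_trivial, hsqrt.isHermitian.eq,
      CFC.sqrt_mul_sqrt_self A (nonneg_iff_posSemidef.mpr hA.posSemidef)]
  refine ⟨CFC.sqrt A, hmul, isUnit_iff_ne_zero.mpr fun h => hA.det_pos.ne' ?_⟩
  rw [← hmul, det_mul, h, mul_zero]

lemma conj_mul (hC : IsUnit C.det) (X Y : Matrix (Fin n) (Fin n) ℝ) :
    C * (X * Y) * C⁻¹ = C * X * C⁻¹ * (C * Y * C⁻¹) := by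
  simp only [Matrix.mul_assoc, nonsing_inv_mul_cancel_left _ _ hC]

lemma conj_one_sub (hC : IsUnit C.det) (X : Matrix (Fin n) (Fin n) ℝ) :
    C * (1 - X) * C⁻¹ = 1 - C * X * C⁻¹ := by
  rw [Matrix.mul_sub, Matrix.sub_mul, Matrix.mul_one, mul_nonsing_inv _ hC]

lemma lamMinPos_conj (hC : IsUnit C.det) (X : Matrix (Fin n) (Fin n) ℝ) :
    lamMinPos (C * X * C⁻¹) = lamMinPos X := by
  lift C to (Matrix (Fin n) (Fin n) ℝ)ˣ using (isUnit_iff_isUnit_det C).mpr hC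
  rw [lamMinPos, lamMinPos, ← coe_units_inv, spectrum.units_conjugate]

lemma isUnit_det_gram_mul (hC : IsUnit C.det) {k : ℕ} {P : Matrix (Fin n) (Fin k) ℝ}
    (hP : P.rank = k) : IsUnit ((C * P)ᵀ * (1 : Matrix (Fin n) (Fin n) ℝ) * (C * P)).det := by
  have hinj : Function.Injective (C * P).mulVec :=
    mulVec_injective_of_rank_eq_s6 <| by
      rw [rank_mul_eq_right_of_isUnit_det C P hC, hP, Fintype.card_fin]
  have hgram := PosDef.one.conjTranspose_mul_mul_same hinj
  rw [conjTranspose_eq_transpose_of_trivial] at hgram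
  exact isUnit_iff_ne_zero.mpr hgram.det_pos.ne'

variable (hA : Cᵀ * C = A) (hC : IsUnit C.det)
include hA hC

lemma conj_sandwich {k : ℕ} (S : Matrix (Fin n) (Fin k) ℝ) (M : Matrix (Fin k) (Fin k) ℝ) :
    C * (S * M * Sᵀ * A) * C⁻¹ = C * S * M * (C * S)ᵀ := by
  rw [← hA, transpose_mul]
  simp only [Matrix.mul_assoc, mul_nonsing_inv _ hC, Matrix.mul_one]

lemma conj_proj {k : ℕ} (P : Matrix (Fin n) (Fin k) ℝ) : C * proj A P * C⁻¹ = proj 1 (C * P) := by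
  have hgram : Pᵀ * A * P = (C * P)ᵀ * (1 : Matrix (Fin n) (Fin n) ℝ) * (C * P) := by
    rw [← hA, Matrix.mul_one]
    simp only [transpose_mul, Matrix.mul_assoc]
  rw [proj, conj_sandwich hA hC, hgram]
  simp only [proj, Matrix.mul_one]

lemma aNorm_eq_norm_conj (B : Matrix (Fin n) (Fin n) ℝ) : aNorm A B = ‖C * B * C⁻¹‖ := by
  have heNorm : ∀ v, eNorm A v = ‖WithLp.toLp 2 (C *ᵥ v)‖ := fun v => by
    rw [eNorm, norm_eq_sqrt_real_inner, EuclideanSpace.inner_eq_star_dotProduct, ← hA,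
      ← mulVec_mulVec, dotProduct_mulVec, vecMul_transpose]
    simp
  have hCinv : ∀ u, C *ᵥ (C⁻¹ *ᵥ u) = u := fun u => by
    rw [mulVec_mulVec, mul_nonsing_inv _ hC, one_mulVec]
  have hconj : ∀ v, (C * B * C⁻¹) *ᵥ (C *ᵥ v) = C *ᵥ (B *ᵥ v) := fun v => by
    rw [mulVec_mulVec, Matrix.mul_assoc (C * B), nonsing_inv_mul _ hC, Matrix.mul_one,
      ← mulVec_mulVec]
  rw [cstar_norm_def, ← ContinuousLinearMap.sSup_norm_apply_div_norm_eq, aNorm]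
  congr 1
  ext r
  constructor
  · rintro ⟨v, hv, rfl⟩
    refine ⟨WithLp.toLp 2 (C *ᵥ v), ?_, ?_⟩
    · simpa using (mulVec_injective_of_isUnit ((isUnit_iff_isUnit_det C).mpr hC)).ne hv
    · rw [heNorm, heNorm, toEuclideanCLM_toLp, hconj]
  · rintro ⟨u, hu, rfl⟩
    refine ⟨C⁻¹ *ᵥ WithLp.ofLp u, fun h => hu ?_, ?_⟩
    · simpa [h] using (hCinv (WithLp.ofLp u)).symm
    · rw [heNorm, heNorm, ← hconj, hCinv, ← toEuclideanCLM_toLp, WithLp.toLp_ofLp]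

lemma sigmaTL_eq_lamMinPos_conj {ns k : ℕ} (S : Matrix (Fin n) (Fin ns) ℝ)
    (P : Matrix (Fin n) (Fin k) ℝ) (Ms : Matrix (Fin ns) (Fin ns) ℝ) :
    sigmaTL A S P Ms =
      lamMinPos (C * S * (tMs Ms (Sᵀ * A * S))⁻¹ * (C * S)ᵀ * (1 - proj 1 (C * P))) := by
  rw [sigmaTL, ← lamMinPos_conj hC, conj_mul hC, smoothX, conj_sandwich hA hC, conj_one_sub hC,
    conj_proj hA hC]

lemma conj_Etl {ns k : ℕ} (S : Matrix (Fin n) (Fin ns) ℝ) (P : Matrix (Fin n) (Fin k) ℝ)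
    (Ms : Matrix (Fin ns) (Fin ns) ℝ) :
    C * Etl A S P Ms * C⁻¹ = star (1 - C * S * Ms⁻¹ * (C * S)ᵀ) * (1 - proj 1 (C * P)) *
      (1 - C * S * Ms⁻¹ * (C * S)ᵀ) := by
  rw [Etl, conj_mul hC, conj_mul hC, conj_one_sub hC, conj_one_sub hC, conj_one_sub hC,
    conj_sandwich hA hC, conj_sandwich hA hC, conj_proj hA hC, star_sub, star_one,
    star_eq_conjTranspose, conjTranspose_eq_transpose_of_trivial]
  simp only [transpose_mul, transpose_transpose, transpose_nonsing_inv, Matrix.mul_assoc]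

end Conjugation

lemma posDef_inv_tMs {ns : ℕ} {Ms As : Matrix (Fin ns) (Fin ns) ℝ} (hMs : IsUnit Ms.det)
    (hMsA : (Ms + Msᵀ - As).PosDef) : (tMs Ms As)⁻¹.PosDef := by
  have h := hMsA.inv.conjTranspose_mul_mul_same
    (mulVec_injective_of_isUnit ((isUnit_iff_isUnit_det Ms).mpr hMs))
  rw [conjTranspose_eq_transpose_of_trivial] at h
  exact h.inv

lemma eq_zero_of_one_sub_proj_mulVec_eq {n m k : ℕ} {B : Matrix (Fin n) (Fin m) ℝ}
    {M : Matrix (Fin m) (Fin m) ℝ} {K : Matrix (Fin n) (Fin k) ℝ} (hM : M.PosDef)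
    (hK : IsUnit (Kᵀ * (1 : Matrix (Fin n) (Fin n) ℝ) * K).det) (hBK : (fromCols B K).rank = n)
    {x : Fin n → ℝ} (hx : (1 - proj 1 K) *ᵥ x = x) (hYx : (B * M * Bᵀ) *ᵥ x = 0) : x = 0 := by
  have hprojx : proj 1 K *ᵥ x = 0 := by rwa [sub_mulVec, one_mulVec, sub_eq_self] at hx
  have hKx : Kᵀ *ᵥ x = 0 := by
    rw [← Matrix.mul_one Kᵀ, ← transpose_mul_mul_proj hK, ← mulVec_mulVec, hprojx, mulVec_zero]
  have hBx : Bᵀ *ᵥ x = 0 := hM.transpose_mulVec_eq_zero B hYx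
  refine mulVec_injective_of_rank_eq_s6 (M := (fromCols B K)ᵀ)
    (by rw [rank_transpose, hBK, Fintype.card_fin]) ?_
  rw [transpose_fromCols, fromRows_mulVec, hBx, hKx, mulVec_zero, Sum.elim_zero_zero]

end TwoLevel

open TwoLevel

theorem sigma_monotone_in_coarse_space_general {n ns nc mc : ℕ}
    (A : Matrix (Fin n) (Fin n) ℝ) (hA : A.PosDef)
    (S : Matrix (Fin n) (Fin ns) ℝ)
    (P : Matrix (Fin n) (Fin nc) ℝ) (hP : P.rank = nc)
    (hSP : (fromCols S P).rank = n)
    (Ms : Matrix (Fin ns) (Fin ns) ℝ) (hMs : IsUnit Ms.det)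
    (hMsA : (Ms + Msᵀ - Sᵀ * A * S).PosDef)
    (Ph : Matrix (Fin n) (Fin mc) ℝ) (hPh : Ph.rank = mc)
    (hmc : mc < n)
    (hsub : LinearMap.range P.mulVecLin ≤ LinearMap.range Ph.mulVecLin) :
    sigmaTL A S P Ms ≤ sigmaTL A S Ph Ms ∧
      aNorm A (Etl A S Ph Ms) ≤ aNorm A (Etl A S P Ms) := by
  obtain ⟨C, hCA, hC⟩ := exists_transpose_mul_self_eq hA
  have hK := isUnit_det_gram_mul hC hP
  have hKh := isUnit_det_gram_mul hC hPh
  have hR := (isStarProjection_proj_one hK).one_sub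
  have hRh := (isStarProjection_proj_one hKh).one_sub
  have hRRh := one_sub_proj_one_mul_of_range_le hK hKh (range_mulVecLin_mul_mono C hsub)
  have hM := posDef_inv_tMs hMs hMsA
  constructor
  · rw [sigmaTL_eq_lamMinPos_conj hCA hC, sigmaTL_eq_lamMinPos_conj hCA hC]
    refine lamMinPos_mul_le_of_mul_eq (hM.posSemidef.mul_mul_transpose_same _) hR hRh hRRh
      (fun x hx hYx => eq_zero_of_one_sub_proj_mulVec_eq hM hK ?_ hx hYx) (one_sub_proj_ne_zero hmc)
    rw [← mul_fromCols, rank_mul_eq_right_of_isUnit_det C _ hC, hSP]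
  · rw [aNorm_eq_norm_conj hCA hC, aNorm_eq_norm_conj hCA hC, conj_Etl hCA hC, conj_Etl hCA hC]
    exact hR.norm_star_mul_mul_le_of_mul_eq hRh hRRh _

/-- Monotonicity of `σ_TL` in the coarse space: if `Range(P) ⊆ Range(P̂)`, then
`σ_TL ≤ σ̂_TL`, and hence the exact TLHB convergence factor does not increase. -/
theorem sigma_monotone_in_coarse_space {n ns nc mc : ℕ}
    (A : Matrix (Fin n) (Fin n) ℝ) (hA : A.PosDef)
    (S : Matrix (Fin n) (Fin ns) ℝ) (hS : S.rank = ns)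
    (P : Matrix (Fin n) (Fin nc) ℝ) (hP : P.rank = nc)
    (hns : ns < n) (hnc : nc < n) (hsum : n ≤ ns + nc)
    (hSP : (fromCols S P).rank = n)
    (Ms : Matrix (Fin ns) (Fin ns) ℝ) (hMs : IsUnit Ms.det)
    (hMsA : (Ms + Msᵀ - Sᵀ * A * S).PosDef)
    (Ph : Matrix (Fin n) (Fin mc) ℝ) (hPh : Ph.rank = mc)
    (hncle : nc ≤ mc) (hmc : mc < n)
    (hSPh : (fromCols S Ph).rank = n)
    (hsub : LinearMap.range P.mulVecLin ≤ LinearMap.range Ph.mulVecLin) :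
    sigmaTL A S P Ms ≤ sigmaTL A S Ph Ms ∧
      aNorm A (Etl A S Ph Ms) ≤ aNorm A (Etl A S P Ms) :=
  sigma_monotone_in_coarse_space_general A hA S P hP hSP Ms hMs hMsA Ph hPh hmc hsub
end
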